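/- arXiv:1704.00820 — 8 statements merged into one kernel-verified Lean document; each statement's English description precedes it below -/
import Mathlib

section
/- Let X and Y be random variables over {−1,1}ⁿ. The channel p_{Y|X} satisfies: for every subset S ⊆ [n] there exists c_S ∈ [−1,1] with E[χ_S(Y)|X] = c_S·χ_S(X) (where χ_S(x) = ∏_{i∈S} x_i), if and only if there exists a random variable Z over {−1,1}ⁿ independent of X with Y = X ⊕ Z (entrywise product). -/
open Finset Real

private def sgn (b : Bool) : ℝ := if b then -1 else 1

private lemma sgn_def (b : Bool) : (if b then (-1 : ℝ) else 1) = sgn b := rfl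

private lemma sgn_xor (a b : Bool) : sgn (xor a b) = sgn a * sgn b := by
  cases a <;> cases b <;> simp [sgn]

private lemma abs_sgn (b : Bool) : |sgn b| = 1 := by cases b <;> simp [sgn]

private lemma chi_xor {n : ℕ} (S : Finset (Fin n)) (x y : Fin n → Bool) :
    (∏ i ∈ S, sgn (xor (x i) (y i))) = (∏ i ∈ S, sgn (x i)) * ∏ i ∈ S, sgn (y i) := by
  rw [← Finset.prod_mul_distrib]
  exact Finset.prod_congr rfl fun i _ => sgn_xor _ _

private lemma orth {n : ℕ} (z : Fin n → Bool) :
    ∑ S : Finset (Fin n), ∏ i ∈ S, sgn (z i) =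
      if z = (fun _ => false) then (2 : ℝ) ^ n else 0 := by
  have h1 : (∏ i : Fin n, (sgn (z i) + 1)) = ∑ S : Finset (Fin n), ∏ i ∈ S, sgn (z i) := by
    rw [Finset.prod_add, ← Finset.powerset_univ]
    simp
  rw [← h1]
  by_cases h : z = fun _ => false
  · subst h; simp [sgn]; norm_num
  · rw [if_neg h]
    obtain ⟨i, hi⟩ : ∃ i, z i = true := by
      by_contra hc
      push_neg at hc
      exact h (funext fun i => by simpa using hc i)
    exact Finset.prod_eq_zero (Finset.mem_univ i) (by simp [sgn, hi])

/-- A channel `W` on `{-1,1}ⁿ` (encoded by `Bool`, with `b ↦ if b then -1 else 1`)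
is a parity-changing channel — i.e. for every `S ⊆ [n]` there is `c_S ∈ [-1,1]`
with `E[χ_S(Y)|X = x] = c_S χ_S(x)` for all `x` — if and only if it is a binary
additive noise channel: `Y = X ⊕ Z` for some noise `Z` independent of `X`. -/
theorem parity_changing_iff_additive_noise (n : ℕ)
    (W : (Fin n → Bool) → (Fin n → Bool) → ℝ)
    (hW0 : ∀ x y, 0 ≤ W x y) (hW1 : ∀ x, ∑ y, W x y = 1) :
    (∀ S : Finset (Fin n), ∃ c : ℝ, c ∈ Set.Icc (-1 : ℝ) 1 ∧
        ∀ x, (∑ y, (∏ i ∈ S, (if y i then (-1 : ℝ) else 1)) * W x y) =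
          c * ∏ i ∈ S, (if x i then (-1 : ℝ) else 1)) ↔
      ∃ pZ : (Fin n → Bool) → ℝ, (∀ z, 0 ≤ pZ z) ∧ (∑ z, pZ z = 1) ∧
        ∀ x y, W x y = pZ fun i => xor (x i) (y i) := by
  simp only [sgn_def]
  constructor
  · intro h
    choose c hc1 hc2 using h
    refine ⟨W (fun _ => false), fun z => hW0 _ z, hW1 _, ?_⟩
    have key : ∀ x y : Fin n → Bool, (2 : ℝ) ^ n * W x y
        = ∑ S : Finset (Fin n), c S * ((∏ i ∈ S, sgn (x i)) * ∏ i ∈ S, sgn (y i)) := by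
      intro x y
      have e1 : ∑ S : Finset (Fin n),
            (∏ i ∈ S, sgn (y i)) * (∑ y', (∏ i ∈ S, sgn (y' i)) * W x y')
          = (2 : ℝ) ^ n * W x y := by
        have step1 : ∀ S : Finset (Fin n),
            (∏ i ∈ S, sgn (y i)) * (∑ y', (∏ i ∈ S, sgn (y' i)) * W x y')
              = ∑ y', (∏ i ∈ S, sgn (xor (y i) (y' i))) * W x y' := by
          intro S
          rw [Finset.mul_sum]
          refine Finset.sum_congr rfl fun y' _ => ?_
          rw [chi_xor]; ring
        rw [Finset.sum_congr rfl fun S _ => step1 S, Finset.sum_comm]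
        have step2 : ∀ y' : Fin n → Bool,
            ∑ S : Finset (Fin n), (∏ i ∈ S, sgn (xor (y i) (y' i))) * W x y'
              = (if y' = y then (2 : ℝ) ^ n else 0) * W x y' := by
          intro y'
          rw [← Finset.sum_mul, orth]
          congr 1
          have hiff : ((fun i => xor (y i) (y' i)) = (fun _ => false)) ↔ y' = y := by
            constructor
            · intro hc
              funext i
              have := congrFun hc i
              cases hy : y i <;> cases hy' : y' i <;> simp_all
            · intro hy; subst hy; funext i; simp
          simp only [hiff]
        rw [Finset.sum_congr rfl fun y' _ => step2 y']
        simp [Finset.sum_ite_eq']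
      calc (2 : ℝ) ^ n * W x y
          = ∑ S : Finset (Fin n),
              (∏ i ∈ S, sgn (y i)) * (∑ y', (∏ i ∈ S, sgn (y' i)) * W x y') := e1.symm
        _ = ∑ S : Finset (Fin n),
              (∏ i ∈ S, sgn (y i)) * (c S * ∏ i ∈ S, sgn (x i)) :=
            Finset.sum_congr rfl fun S _ => by rw [hc2 S x]
        _ = ∑ S : Finset (Fin n), c S * ((∏ i ∈ S, sgn (x i)) * ∏ i ∈ S, sgn (y i)) :=
            Finset.sum_congr rfl fun S _ => by ring
    intro x y
    have h1 := key x y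
    have h2 := key (fun _ => false) (fun i => xor (x i) (y i))
    have h3 : (2 : ℝ) ^ n * W x y
        = (2 : ℝ) ^ n * W (fun _ => false) (fun i => xor (x i) (y i)) := by
      rw [h1, h2]
      refine Finset.sum_congr rfl fun S _ => ?_
      rw [chi_xor]
      simp [sgn]
    exact mul_left_cancel₀ (by positivity) h3
  · rintro ⟨pZ, hpZ0, hpZ1, hWeq⟩
    intro S
    refine ⟨∑ z, (∏ i ∈ S, sgn (z i)) * pZ z, ?_, ?_⟩
    · rw [Set.mem_Icc, ← abs_le]
      calc |∑ z, (∏ i ∈ S, sgn (z i)) * pZ z|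
          ≤ ∑ z, |(∏ i ∈ S, sgn (z i)) * pZ z| := Finset.abs_sum_le_sum_abs _ _
        _ = ∑ z, pZ z := by
            refine Finset.sum_congr rfl fun z _ => ?_
            rw [abs_mul, abs_of_nonneg (hpZ0 z), Finset.abs_prod,
              Finset.prod_congr rfl fun i _ => abs_sgn (z i), Finset.prod_const_one, one_mul]
        _ = 1 := hpZ1
    · intro x
      have inv : Function.Involutive (fun y : Fin n → Bool => fun i => xor (x i) (y i)) := by
        intro y
        funext i
        simp [← Bool.xor_assoc]
      calc ∑ y, (∏ i ∈ S, sgn (y i)) * W x y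
          = ∑ y : Fin n → Bool, (∏ i ∈ S, sgn (y i)) * pZ (fun i => xor (x i) (y i)) := by
            refine Finset.sum_congr rfl fun y _ => ?_
            rw [hWeq]
        _ = ∑ z, (∏ i ∈ S, sgn (xor (x i) (z i))) * pZ z := by
            refine (Fintype.sum_equiv inv.toPerm _ _ fun z => ?_)
            have hz : ∀ i, xor (x i) (xor (x i) (z i)) = z i := fun i => by
              simp [← Bool.xor_assoc]
            simp only [Function.Involutive.coe_toPerm, hz]
        _ = (∑ z, (∏ i ∈ S, sgn (z i)) * pZ z) * ∏ i ∈ S, sgn (x i) := by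
            rw [Finset.sum_mul]
            refine Finset.sum_congr rfl fun z _ => ?_
            rw [chi_xor]; ring
end

section
/- Let B and B̂ be binary random variables with Pr[B=0] = a and Pr[B̂=0] = b, and joint distribution determined by z = Pr[B = B̂ = 0]. If B → X → Y → B̂ is a Markov chain, then z ≤ ab + ρ_m(X;Y)·√(a(1−a)b(1−b)), where ρ_m(X;Y) is the maximal correlation between X and Y. -/
/-!
By the Markov chain, `z = E[u(X) w(Y)]` with `u(x) = Pr[B = 0 | X = x]` and
`w(y) = Pr[B̂ = 0 | Y = y]`, while `a = E[u(X)]` and `b = E[w(Y)]`; hence `z - ab` is the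
covariance of `u(X)` and `w(Y)`. Rescaled to unit variance, the centred `u` and `w` are admissible
in the definition of maximal correlation, so the covariance is at most `ρₘ(X;Y)` times the product
of the standard deviations (when a variance vanishes, Cauchy–Schwarz makes the covariance vanish
too). Finally, a `[0, 1]`-valued variable with mean `a` has variance at most `a(1 - a)`.
-/

open Finset Real

/-- Maximal correlation of a joint pmf `r` on `α × β`: the supremum of
`E[f(X)g(Y)]` over zero-mean, unit-second-moment `f`, `g`. -/
noncomputable def maxCorr {α β : Type*} [Fintype α] [Fintype β]
    (r : α → β → ℝ) : ℝ :=
  sSup { t : ℝ | ∃ f : α → ℝ, ∃ g : β → ℝ,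
    (∑ x, ∑ y, f x * r x y) = 0 ∧ (∑ x, ∑ y, g y * r x y) = 0 ∧
    (∑ x, ∑ y, (f x) ^ 2 * r x y) = 1 ∧ (∑ x, ∑ y, (g y) ^ 2 * r x y) = 1 ∧
    t = ∑ x, ∑ y, f x * g y * r x y }

section WeightedSum

variable {ι : Type*} [Fintype ι] {w : ι → ℝ}

theorem sq_sum_mul_mul_le (hw : ∀ i, 0 ≤ w i) (f g : ι → ℝ) :
    (∑ i, f i * g i * w i) ^ 2 ≤ (∑ i, f i ^ 2 * w i) * ∑ i, g i ^ 2 * w i :=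
  sum_sq_le_sum_mul_sum_of_sq_le_mul _ (fun i _ ↦ mul_nonneg (sq_nonneg _) (hw i))
    (fun i _ ↦ mul_nonneg (sq_nonneg _) (hw i)) fun i _ ↦ (by ring : _ = _).le

theorem sum_sub_mean_mul_eq_zero (hw : ∑ i, w i = 1) (f : ι → ℝ) :
    ∑ i, (f i - ∑ j, f j * w j) * w i = 0 := by
  simp only [sub_mul, sum_sub_distrib, ← mul_sum, hw, mul_one, sub_self]

theorem sum_sub_mean_mul_sub_mean_mul (hw : ∑ i, w i = 1) (f g : ι → ℝ) :
    ∑ i, (f i - ∑ j, f j * w j) * (g i - ∑ j, g j * w j) * w i =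
      ∑ i, f i * g i * w i - (∑ i, f i * w i) * ∑ i, g i * w i := by
  set a := ∑ j, f j * w j
  set b := ∑ j, g j * w j
  have expand : ∀ i, (f i - a) * (g i - b) * w i =
      f i * g i * w i - b * (f i * w i) - a * (g i * w i) + a * b * w i := fun i ↦ by ring
  simp only [expand, sum_add_distrib, sum_sub_distrib, ← mul_sum, hw]
  ring

theorem sum_sub_mean_sq_mul_le (hw0 : ∀ i, 0 ≤ w i) (hw1 : ∑ i, w i = 1) {f : ι → ℝ}
    (hf0 : ∀ i, 0 ≤ f i) (hf1 : ∀ i, f i ≤ 1) :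
    ∑ i, (f i - ∑ j, f j * w j) ^ 2 * w i ≤ (∑ i, f i * w i) * (1 - ∑ i, f i * w i) := by
  have hff : ∑ i, f i * f i * w i ≤ ∑ i, f i * w i :=
    sum_le_sum fun i _ ↦ mul_le_mul_of_nonneg_right
      (mul_le_of_le_one_right (hf0 i) (hf1 i)) (hw0 i)
  simp only [sq, sum_sub_mean_mul_sub_mean_mul hw1]
  linarith

end WeightedSum

section MaxCorr

variable {α β : Type*} [Fintype α] [Fintype β] {r : α → β → ℝ}

def corrValues (r : α → β → ℝ) : Set ℝ :=
  { t : ℝ | ∃ f : α → ℝ, ∃ g : β → ℝ,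
    (∑ x, ∑ y, f x * r x y) = 0 ∧ (∑ x, ∑ y, g y * r x y) = 0 ∧
    (∑ x, ∑ y, (f x) ^ 2 * r x y) = 1 ∧ (∑ x, ∑ y, (g y) ^ 2 * r x y) = 1 ∧
    t = ∑ x, ∑ y, f x * g y * r x y }

theorem mul_sum_sum {R : Type*} [NonUnitalNonAssocSemiring R] (c : R) (h : α → β → R) :
    c * ∑ x, ∑ y, h x y = ∑ x, ∑ y, c * h x y := by
  simp only [mul_sum]

theorem maxCorr_eq_sSup_corrValues : maxCorr r = sSup (corrValues r) := rfl

theorem sq_sum_sum_mul_mul_le (hr : ∀ x y, 0 ≤ r x y) (f : α → ℝ) (g : β → ℝ) :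
    (∑ x, ∑ y, f x * g y * r x y) ^ 2 ≤
      (∑ x, ∑ y, f x ^ 2 * r x y) * ∑ x, ∑ y, g y ^ 2 * r x y := by
  simpa only [Fintype.sum_prod_type] using
    sq_sum_mul_mul_le (w := fun p : α × β ↦ r p.1 p.2) (fun p ↦ hr p.1 p.2)
      (fun p ↦ f p.1) (fun p ↦ g p.2)

theorem corrValues_bddAbove (hr : ∀ x y, 0 ≤ r x y) : BddAbove (corrValues r) := by
  refine ⟨1, ?_⟩
  rintro t ⟨f, g, -, -, hf2, hg2, rfl⟩
  have hCS := sq_sum_sum_mul_mul_le hr f g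
  rw [hf2, hg2, one_mul] at hCS
  nlinarith

theorem le_maxCorr (hr : ∀ x y, 0 ≤ r x y) {f : α → ℝ} {g : β → ℝ}
    (hf : ∑ x, ∑ y, f x * r x y = 0) (hg : ∑ x, ∑ y, g y * r x y = 0)
    (hf2 : ∑ x, ∑ y, f x ^ 2 * r x y = 1) (hg2 : ∑ x, ∑ y, g y ^ 2 * r x y = 1) :
    ∑ x, ∑ y, f x * g y * r x y ≤ maxCorr r :=
  le_csSup (corrValues_bddAbove hr) ⟨f, g, hf, hg, hf2, hg2, rfl⟩

theorem maxCorr_nonneg (hr : ∀ x y, 0 ≤ r x y) : 0 ≤ maxCorr r := by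
  rcases (corrValues r).eq_empty_or_nonempty with h | ⟨t, f, g, hf, hg, hf2, hg2, rfl⟩
  · rw [maxCorr_eq_sSup_corrValues, h, Real.sSup_empty]
  · have hpos := le_maxCorr hr hf hg hf2 hg2
    have hneg := le_maxCorr hr (f := -f) (by simp [hf]) hg (by simpa using hf2) hg2
    simp only [Pi.neg_apply, neg_mul, sum_neg_distrib] at hneg
    linarith

theorem sum_sum_mul_mul_le_maxCorr_mul (hr : ∀ x y, 0 ≤ r x y) {f : α → ℝ} {g : β → ℝ}
    (hf : ∑ x, ∑ y, f x * r x y = 0) (hg : ∑ x, ∑ y, g y * r x y = 0) :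
    ∑ x, ∑ y, f x * g y * r x y ≤
      maxCorr r * (√(∑ x, ∑ y, f x ^ 2 * r x y) * √(∑ x, ∑ y, g y ^ 2 * r x y)) := by
  have hCS := sq_sum_sum_mul_mul_le hr f g
  set Vf := ∑ x, ∑ y, f x ^ 2 * r x y
  set Vg := ∑ x, ∑ y, g y ^ 2 * r x y
  have hVf : 0 ≤ Vf := sum_nonneg fun x _ ↦ sum_nonneg fun y _ ↦ mul_nonneg (sq_nonneg _) (hr x y)
  have hVg : 0 ≤ Vg := sum_nonneg fun x _ ↦ sum_nonneg fun y _ ↦ mul_nonneg (sq_nonneg _) (hr x y)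
  rcases hVf.eq_or_lt with hVf | hVf
  · rw [← hVf, zero_mul] at hCS
    rw [← hVf, sqrt_zero, zero_mul, mul_zero, sq_eq_zero_iff.mp (le_antisymm hCS (sq_nonneg _))]
  rcases hVg.eq_or_lt with hVg | hVg
  · rw [← hVg, mul_zero] at hCS
    rw [← hVg, sqrt_zero, mul_zero, mul_zero, sq_eq_zero_iff.mp (le_antisymm hCS (sq_nonneg _))]
  set cf := (√Vf)⁻¹
  set cg := (√Vg)⁻¹
  have hf2 : ∑ x, ∑ y, (cf * f x) ^ 2 * r x y = 1 := by
    simp only [mul_pow, mul_assoc, ← mul_sum_sum, cf, inv_pow, sq_sqrt hVf.le]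
    exact inv_mul_cancel₀ hVf.ne'
  have hg2 : ∑ x, ∑ y, (cg * g y) ^ 2 * r x y = 1 := by
    simp only [mul_pow, mul_assoc, ← mul_sum_sum, cg, inv_pow, sq_sqrt hVg.le]
    exact inv_mul_cancel₀ hVg.ne'
  have hnorm := le_maxCorr hr (f := fun x ↦ cf * f x) (g := fun y ↦ cg * g y)
    (by simp only [mul_assoc, ← mul_sum_sum, hf, mul_zero])
    (by simp only [mul_assoc, ← mul_sum_sum, hg, mul_zero]) hf2 hg2
  have hscale : ∀ x y, cf * f x * (cg * g y) * r x y = (cf * cg) * (f x * g y * r x y) :=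
    fun x y ↦ by ring
  simp only [hscale, ← mul_sum_sum, cf, cg, ← mul_inv] at hnorm
  rw [inv_mul_le_iff₀ (by positivity)] at hnorm
  linarith

theorem sum_sum_mul_mul_le_mul_add_maxCorr_mul (hr0 : ∀ x y, 0 ≤ r x y)
    (hr1 : ∑ x, ∑ y, r x y = 1) {f : α → ℝ} {g : β → ℝ} {a b : ℝ}
    (ha : ∑ x, ∑ y, f x * r x y = a) (hb : ∑ x, ∑ y, g y * r x y = b) :
    ∑ x, ∑ y, f x * g y * r x y ≤ a * b + maxCorr r *
      (√(∑ x, ∑ y, (f x - a) ^ 2 * r x y) * √(∑ x, ∑ y, (g y - b) ^ 2 * r x y)) := by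
  have hr1prod : ∑ p : α × β, r p.1 p.2 = 1 := by rwa [Fintype.sum_prod_type']
  have hf : ∑ x, ∑ y, (f x - a) * r x y = 0 := by
    simpa only [Fintype.sum_prod_type, ha] using
      sum_sub_mean_mul_eq_zero hr1prod (fun p : α × β ↦ f p.1)
  have hg : ∑ x, ∑ y, (g y - b) * r x y = 0 := by
    simpa only [Fintype.sum_prod_type, hb] using
      sum_sub_mean_mul_eq_zero hr1prod (fun p : α × β ↦ g p.2)
  have hcov := sum_sub_mean_mul_sub_mean_mul hr1prod (fun p : α × β ↦ f p.1) (fun p ↦ g p.2)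
  simp only [Fintype.sum_prod_type, ha, hb] at hcov
  linarith [sum_sum_mul_mul_le_maxCorr_mul hr0 hf hg]

theorem sum_sum_sub_sq_mul_le (hr0 : ∀ x y, 0 ≤ r x y) (hr1 : ∑ x, ∑ y, r x y = 1)
    {h : α → β → ℝ} (hh0 : ∀ x y, 0 ≤ h x y) (hh1 : ∀ x y, h x y ≤ 1) {a : ℝ}
    (ha : ∑ x, ∑ y, h x y * r x y = a) :
    ∑ x, ∑ y, (h x y - a) ^ 2 * r x y ≤ a * (1 - a) := by
  have hr1prod : ∑ p : α × β, r p.1 p.2 = 1 := by rwa [Fintype.sum_prod_type']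
  simpa only [Fintype.sum_prod_type, ha] using
    sum_sub_mean_sq_mul_le (fun p ↦ hr0 p.1 p.2) hr1prod (f := fun p : α × β ↦ h p.1 p.2)
      (fun p ↦ hh0 p.1 p.2) (fun p ↦ hh1 p.1 p.2)

end MaxCorr

/-- The joint pmf of `(B, X, Y, B̂)` is `(c, x, y, ĉ) ↦ r x y * u x c * w y ĉ`, and `true` encodes
the symbol `0`. -/
theorem agreement_prob_le_maxCorr {α β : Type*} [Fintype α] [Fintype β]
    (r : α → β → ℝ) (hr0 : ∀ x y, 0 ≤ r x y) (hr1 : ∑ x, ∑ y, r x y = 1)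
    (u : α → Bool → ℝ) (hu0 : ∀ x c, 0 ≤ u x c)
    (hu1 : ∀ x, u x false + u x true = 1)
    (w : β → Bool → ℝ) (hw0 : ∀ y c, 0 ≤ w y c)
    (hw1 : ∀ y, w y false + w y true = 1)
    (a b : ℝ)
    (ha : a = ∑ x, ∑ y, r x y * u x true)
    (hb : b = ∑ x, ∑ y, r x y * w y true) :
    (∑ x, ∑ y, r x y * (u x true * w y true)) ≤
      a * b + maxCorr r * Real.sqrt (a * (1 - a) * (b * (1 - b))) := by
  have ha' : ∑ x, ∑ y, u x true * r x y = a := by rw [ha]; simp only [mul_comm]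
  have hb' : ∑ x, ∑ y, w y true * r x y = b := by rw [hb]; simp only [mul_comm]
  have hu_le : ∀ x, u x true ≤ 1 := fun x ↦ by linarith [hu0 x false, hu1 x]
  have hw_le : ∀ y, w y true ≤ 1 := fun y ↦ by linarith [hw0 y false, hw1 y]
  have hvarU := sum_sum_sub_sq_mul_le hr0 hr1 (fun x _ ↦ hu0 x true) (fun x _ ↦ hu_le x) ha'
  have hvarW := sum_sum_sub_sq_mul_le hr0 hr1 (fun _ y ↦ hw0 y true) (fun _ y ↦ hw_le y) hb'
  have hvarU0 : 0 ≤ ∑ x, ∑ y, (u x true - a) ^ 2 * r x y :=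
    sum_nonneg fun x _ ↦ sum_nonneg fun y _ ↦ mul_nonneg (sq_nonneg _) (hr0 x y)
  have hmaxCorr := maxCorr_nonneg hr0
  calc ∑ x, ∑ y, r x y * (u x true * w y true)
      = ∑ x, ∑ y, u x true * w y true * r x y := by simp only [mul_comm]
    _ ≤ a * b + maxCorr r * (√(∑ x, ∑ y, (u x true - a) ^ 2 * r x y) *
          √(∑ x, ∑ y, (w y true - b) ^ 2 * r x y)) :=
      sum_sum_mul_mul_le_mul_add_maxCorr_mul hr0 hr1 ha' hb'
    _ ≤ a * b + maxCorr r * (√(a * (1 - a)) * √(b * (1 - b))) := by gcongr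
    _ = a * b + maxCorr r * √(a * (1 - a) * (b * (1 - b))) := by
      rw [sqrt_mul (hvarU0.trans hvarU)]
end

section
/- Let X be uniformly distributed on [q] and let Ỹ be the output of a q-ary symmetric channel with crossover probability ε ≤ (q−1)/q applied to X. Let B = b(X) for a function b: [q] → {0,1} with Pr[B=0] = a where aq is an integer. Then with σ = 1 − εq/(q−1) and writing the mutual information in bits with σ = 1−2δ: I(B;Ỹ) = h_b(a) − a·h_b(2δ(1−a)) − (1−a)·h_b(2δa), where h_b is the binary entropy function. -/
open Finset Real

/-- Binary entropy (in bits). -/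
noncomputable def binEnt (x : ℝ) : ℝ :=
  -(x * Real.logb 2 x) - (1 - x) * Real.logb 2 (1 - x)

/-! The channel transmits its input with probability `1 - 2δ` and otherwise outputs a uniform
symbol, so `Ỹ` is uniform and the joint law of `(B, Ỹ)` depends on `b` only through the class
probabilities `a` and `1 - a`. In the resulting sum the logarithms of `a` and `1 - a` carry total
coefficients `a` and `1 - a`, and what remains regroups into binary entropies. -/

theorem mul_logb_div (c x y : ℝ) (hy : y ≠ 0) :
    x * logb c (x / y) = x * logb c x - x * logb c y := by
  rcases eq_or_ne x 0 with rfl | hx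
  · simp
  · rw [logb_div hx hy, mul_sub]

/-- The contribution to `I(B; Ỹ)` of a value of `B` taken with probability `m`: given that value,
`Ỹ` lies in its preimage with probability `1 - 2δ(1 - m)` and hits each of the other symbols with
probability `2δ / q`. -/
noncomputable def symmetricChannelClassInfo (δ m : ℝ) : ℝ :=
  m * (1 - 2 * δ * (1 - m)) * logb 2 ((1 - 2 * δ * (1 - m)) / m) +
    (1 - m) * (2 * δ * m) * logb 2 (2 * δ * m / m)

theorem symmetricChannelClassInfo_add_one_sub (δ a : ℝ) :
    symmetricChannelClassInfo δ a + symmetricChannelClassInfo δ (1 - a) =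
      binEnt a - a * binEnt (2 * δ * (1 - a)) - (1 - a) * binEnt (2 * δ * a) := by
  rcases eq_or_ne a 0 with rfl | ha0
  · simp [symmetricChannelClassInfo, binEnt]
  rcases eq_or_ne a 1 with rfl | ha1
  · simp [symmetricChannelClassInfo, binEnt]
  have ha1' : 1 - a ≠ 0 := sub_ne_zero.mpr (Ne.symm ha1)
  simp only [symmetricChannelClassInfo, sub_sub_cancel, mul_assoc, mul_logb_div _ _ _ ha0,
    mul_logb_div _ _ _ ha1', binEnt]
  ring

theorem sum_fin_one_div_cast {q : ℕ} (hq : q ≠ 0) : ∑ _x : Fin q, (1 / (q : ℝ)) = 1 := by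
  simp [hq]

section SymmetricChannel

variable {q : ℕ} {ε δ : ℝ}

theorem symmetricChannel_eq_mix (hq : 2 ≤ q) (hδ : 1 - ε * q / ((q : ℝ) - 1) = 1 - 2 * δ)
    {α : Type*} [DecidableEq α] (y x : α) :
    (if y = x then 1 - ε else ε / ((q : ℝ) - 1)) =
      (1 - 2 * δ) * (if y = x then 1 else 0) + 2 * δ / q := by
  have hq0 : (q : ℝ) ≠ 0 := by positivity
  have hq1 : (q : ℝ) - 1 ≠ 0 := by
    have : (2 : ℝ) ≤ q := by exact_mod_cast hq
    linarith
  field_simp at hδ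
  split_ifs <;> field_simp <;> linarith

theorem sum_symmetricChannel_mul (hq : 2 ≤ q) (hδ : 1 - ε * q / ((q : ℝ) - 1) = 1 - 2 * δ)
    (g : Fin q → ℝ) (y : Fin q) :
    ∑ x, (1 / (q : ℝ)) * (if y = x then 1 - ε else ε / ((q : ℝ) - 1)) * g x =
      (1 / q) * ((1 - 2 * δ) * g y + 2 * δ * ∑ x, (1 / (q : ℝ)) * g x) := by
  simp only [symmetricChannel_eq_mix hq hδ, mul_add, add_mul, sum_add_distrib, mul_ite, mul_one,
    mul_zero, ite_mul, zero_mul, sum_ite_eq, mem_univ, if_true, mul_sum]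
  congr 1
  · ring
  · exact sum_congr rfl fun x _ => by ring

theorem sum_symmetricChannel (hq : 2 ≤ q) (hδ : 1 - ε * q / ((q : ℝ) - 1) = 1 - 2 * δ)
    (y : Fin q) :
    ∑ x, (1 / (q : ℝ)) * (if y = x then 1 - ε else ε / ((q : ℝ) - 1)) = 1 / q := by
  have h := sum_symmetricChannel_mul hq hδ (fun _ => 1) y
  simp only [mul_one, sum_fin_one_div_cast (by omega : q ≠ 0)] at h
  rw [h]
  ring

theorem sum_symmetricChannel_info_eq (hq : 2 ≤ q)
    (hδ : 1 - ε * q / ((q : ℝ) - 1) = 1 - 2 * δ) {β : Type*} [DecidableEq β]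
    (b : Fin q → β) (c : β) :
    ∑ y : Fin q,
        (∑ x, (1 / (q : ℝ)) * (if y = x then 1 - ε else ε / ((q : ℝ) - 1)) *
            (if b x = c then (1 : ℝ) else 0)) *
          logb 2
            ((∑ x, (1 / (q : ℝ)) * (if y = x then 1 - ε else ε / ((q : ℝ) - 1)) *
                (if b x = c then (1 : ℝ) else 0)) /
              ((∑ x, (1 / (q : ℝ)) * (if b x = c then (1 : ℝ) else 0)) *
                (∑ x, (1 / (q : ℝ)) * (if y = x then 1 - ε else ε / ((q : ℝ) - 1))))) =
      symmetricChannelClassInfo δ (∑ x, (1 / (q : ℝ)) * (if b x = c then (1 : ℝ) else 0)) := by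
  simp only [sum_symmetricChannel_mul hq hδ, sum_symmetricChannel hq hδ]
  set m := ∑ x, (1 / (q : ℝ)) * (if b x = c then (1 : ℝ) else 0) with hm
  have hq0 : (q : ℝ) ≠ 0 := by positivity
  have hscale : ∀ t : ℝ, 1 / q * t / (m * (1 / q)) = t / m := fun t => by
    rw [mul_comm m, mul_div_mul_left _ _ (one_div_ne_zero hq0)]
  have hsplit : ∀ y,
      1 / (q : ℝ) * ((1 - 2 * δ) * (if b y = c then 1 else 0) + 2 * δ * m) *
          logb 2 (((1 - 2 * δ) * (if b y = c then 1 else 0) + 2 * δ * m) / m) =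
        1 / q * (if b y = c then 1 else 0) *
            ((1 - 2 * δ * (1 - m)) * logb 2 ((1 - 2 * δ * (1 - m)) / m)) +
          (1 / q - 1 / q * (if b y = c then 1 else 0)) * (2 * δ * m * logb 2 (2 * δ * m / m)) :=
    fun y => by split_ifs <;> ring_nf
  simp only [hscale]
  rw [sum_congr rfl fun y _ => hsplit y, sum_add_distrib, ← sum_mul, ← sum_mul, sum_sub_distrib,
    sum_fin_one_div_cast (by omega), ← hm, symmetricChannelClassInfo]
  ring

end SymmetricChannel

theorem qary_symmetric_one_bit_mutual_information_general
    (q : ℕ) (hq : 2 ≤ q) (ε : ℝ)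
    (b : Fin q → Bool) (a δ : ℝ)
    (ha : a = (((univ.filter fun x => b x = true).card : ℝ)) / q)
    (hδ : 1 - ε * q / ((q : ℝ) - 1) = 1 - 2 * δ) :
    (∑ bb : Bool, ∑ y : Fin q,
        (∑ x, (1 / (q : ℝ)) * (if y = x then 1 - ε else ε / ((q : ℝ) - 1)) *
            (if b x = bb then (1 : ℝ) else 0)) *
          Real.logb 2
            ((∑ x, (1 / (q : ℝ)) * (if y = x then 1 - ε else ε / ((q : ℝ) - 1)) *
                (if b x = bb then (1 : ℝ) else 0)) /
              ((∑ x, (1 / (q : ℝ)) * (if b x = bb then (1 : ℝ) else 0)) *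
                (∑ x, (1 / (q : ℝ)) *
                  (if y = x then 1 - ε else ε / ((q : ℝ) - 1)))))) =
      binEnt a - a * binEnt (2 * δ * (1 - a)) - (1 - a) * binEnt (2 * δ * a) := by
  have hB_true : ∑ x, (1 / (q : ℝ)) * (if b x = true then (1 : ℝ) else 0) = a := by
    rw [← mul_sum, sum_boole, ha, one_div_mul_eq_div]
  have hB_false : ∑ x, (1 / (q : ℝ)) * (if b x = false then (1 : ℝ) else 0) = 1 - a := by
    have hind : ∀ x, (if b x = false then (1 : ℝ) else 0) = 1 - if b x = true then 1 else 0 :=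
      fun x => by cases b x <;> simp
    simp only [hind, mul_sub, mul_one, sum_sub_distrib, sum_fin_one_div_cast (by omega : q ≠ 0),
      hB_true]
  rw [Fintype.sum_bool, sum_symmetricChannel_info_eq hq hδ, sum_symmetricChannel_info_eq hq hδ,
    hB_true, hB_false, symmetricChannelClassInfo_add_one_sub]

/-- Mutual information (in bits) between `B = b(X)` and the output `Ỹ` of a
`q`-ary symmetric channel with crossover probability `ε ≤ (q-1)/q` applied to a
uniform input `X`, where `Pr[B = 0] = a` (symbol `0` encoded by `true`) with
`aq` an integer, equals `h_b(a) − a h_b(2δ(1−a)) − (1−a) h_b(2δa)` where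
`1 − εq/(q−1) = 1 − 2δ`. -/
theorem qary_symmetric_one_bit_mutual_information
    (q : ℕ) (hq : 2 ≤ q) (ε : ℝ) (hε0 : 0 ≤ ε) (hε1 : ε ≤ ((q : ℝ) - 1) / q)
    (b : Fin q → Bool) (a δ : ℝ)
    (ha : a = (((univ.filter fun x => b x = true).card : ℝ)) / q)
    (hδ : 1 - ε * q / ((q : ℝ) - 1) = 1 - 2 * δ) :
    (∑ bb : Bool, ∑ y : Fin q,
        (∑ x, (1 / (q : ℝ)) * (if y = x then 1 - ε else ε / ((q : ℝ) - 1)) *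
            (if b x = bb then (1 : ℝ) else 0)) *
          Real.logb 2
            ((∑ x, (1 / (q : ℝ)) * (if y = x then 1 - ε else ε / ((q : ℝ) - 1)) *
                (if b x = bb then (1 : ℝ) else 0)) /
              ((∑ x, (1 / (q : ℝ)) * (if b x = bb then (1 : ℝ) else 0)) *
                (∑ x, (1 / (q : ℝ)) *
                  (if y = x then 1 - ε else ε / ((q : ℝ) - 1)))))) =
      binEnt a - a * binEnt (2 * δ * (1 - a)) - (1 - a) * binEnt (2 * δ * a) :=
  qary_symmetric_one_bit_mutual_information_general q hq ε b a δ ha hδ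
end

section
/- For any a ∈ [0,1] and δ ∈ [0,1/2], the function a ↦ h_b(a) − a·h_b(2δ(1−a)) − (1−a)·h_b(2δa) is at most 1 − h_b(δ), with equality at a = 1/2. -/
open Finset Real

/-!
Fix `a ∈ (0, 1)` and view the slack `log 2 - h(x) - (h(a) - a h(2x(1-a)) - (1-a) h(2xa))` (in nats)
as a function of `x ∈ [0, 1/2]`. It vanishes at `x = 1/2`, and so does its derivative, since
`h'(1 - a) = -h'(a)` and `h'(1/2) = 0`. Its second derivative is
`(1-2a)² (1-2x) / (x (1-x) (1-2x(1-a)) (1-2xa)) ≥ 0`, so the derivative is nonpositive on `(0, 1/2]`,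
the slack is antitone on `[0, 1/2]`, and therefore it is nonnegative there.
-/

lemma binEnt_eq_binEntropy_div_log_two (x : ℝ) : binEnt x = binEntropy x / log 2 := by
  rw [binEnt, binEntropy, log_inv, log_inv, logb, logb]
  ring

lemma hasDerivAt_deriv_binEntropy {p : ℝ} (hp₀ : p ≠ 0) (hp₁ : p ≠ 1) :
    HasDerivAt (deriv binEntropy) (-1 / (p * (1 - p))) p := by
  have hdiff : DifferentiableAt ℝ (deriv binEntropy) p := by
    rw [funext deriv_binEntropy]
    have : 1 - p ≠ 0 := sub_ne_zero.mpr hp₁.symm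
    fun_prop (disch := assumption)
  have h2 := deriv2_binEntropy (p := p)
  simp only [Function.iterate_succ, Function.iterate_zero, Function.id_comp,
    Function.comp_apply] at h2
  exact h2 ▸ hdiff.hasDerivAt

lemma HasDerivAt.comp_two_mul_mul {f : ℝ → ℝ} {f' x : ℝ} (c : ℝ)
    (hf : HasDerivAt f f' (2 * x * c)) :
    HasDerivAt (fun y => f (2 * y * c)) (2 * c * f') x := by
  have hlin : HasDerivAt (fun y : ℝ => 2 * y * c) (2 * c) x := by
    simpa using ((hasDerivAt_id' x).const_mul 2).mul_const c
  exact (hf.comp x hlin).congr_deriv (mul_comm _ _)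

noncomputable def entropyGap (a x : ℝ) : ℝ :=
  log 2 - binEntropy x -
    (binEntropy a - a * binEntropy (2 * x * (1 - a)) - (1 - a) * binEntropy (2 * x * a))

noncomputable def entropyGapDeriv (a x : ℝ) : ℝ :=
  2 * a * (1 - a) * (deriv binEntropy (2 * x * (1 - a)) + deriv binEntropy (2 * x * a)) -
    deriv binEntropy x

section

variable {a x : ℝ}

lemma hasDerivAt_entropyGap (ha₀ : 0 < a) (ha₁ : a < 1) (hx₀ : 0 < x) (hx₁ : x < 1 / 2) :
    HasDerivAt (entropyGap a) (entropyGapDeriv a x) x := by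
  have hbin {p : ℝ} (hp₀ : 0 < p) (hp₁ : p < 1) :
      HasDerivAt binEntropy (deriv binEntropy p) p :=
    (differentiableAt_binEntropy hp₀.ne' hp₁.ne).hasDerivAt
  have hp := (hbin (p := 2 * x * (1 - a)) (by nlinarith) (by nlinarith)).comp_two_mul_mul (1 - a)
  have hq := (hbin (p := 2 * x * a) (by nlinarith) (by nlinarith)).comp_two_mul_mul a
  have hx := hbin hx₀ (by linarith)
  refine (((hasDerivAt_const x (log 2)).sub hx).sub
    (((hasDerivAt_const x (binEntropy a)).sub (hp.const_mul a)).sub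
      (hq.const_mul (1 - a)))).congr_deriv ?_
  rw [entropyGapDeriv]
  ring

lemma hasDerivAt_entropyGapDeriv (ha₀ : 0 < a) (ha₁ : a < 1) (hx₀ : 0 < x) (hx₁ : x ≤ 1 / 2) :
    HasDerivAt (entropyGapDeriv a)
      ((1 - 2 * a) ^ 2 * (1 - 2 * x) /
        (x * (1 - x) * (1 - 2 * x * (1 - a)) * (1 - 2 * x * a))) x := by
  have hp := (hasDerivAt_deriv_binEntropy (p := 2 * x * (1 - a)) (by nlinarith)
    (by nlinarith)).comp_two_mul_mul (1 - a)
  have hq := (hasDerivAt_deriv_binEntropy (p := 2 * x * a) (by nlinarith)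
    (by nlinarith)).comp_two_mul_mul a
  have hx := hasDerivAt_deriv_binEntropy hx₀.ne' (by linarith)
  refine (((hp.add hq).const_mul (2 * a * (1 - a))).sub hx).congr_deriv ?_
  have := hx₀.ne'
  have := ha₀.ne'
  have : 1 - x ≠ 0 := by linarith
  have : 1 - a ≠ 0 := by linarith
  have : 1 - 2 * (1 - a) * x ≠ 0 := by nlinarith
  have : 1 - 2 * a * x ≠ 0 := by nlinarith
  field_simp
  ring

lemma entropyGapDeriv_half (a : ℝ) : entropyGapDeriv a (1 / 2) = 0 := by
  simp only [entropyGapDeriv, deriv_binEntropy]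
  ring_nf

lemma entropyGapDeriv_nonpos (ha₀ : 0 < a) (ha₁ : a < 1) (hx₀ : 0 < x) (hx₁ : x ≤ 1 / 2) :
    entropyGapDeriv a x ≤ 0 := by
  have hderiv {y : ℝ} (hy : y ∈ Set.Icc x (1 / 2)) :=
    hasDerivAt_entropyGapDeriv ha₀ ha₁ (hx₀.trans_le hy.1) hy.2
  have hmono : MonotoneOn (entropyGapDeriv a) (Set.Icc x (1 / 2)) :=
    monotoneOn_of_hasDerivWithinAt_nonneg (convex_Icc x (1 / 2))
      (fun y hy => (hderiv hy).continuousAt.continuousWithinAt)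
      (fun y hy => (hderiv (interior_subset hy)).hasDerivWithinAt)
      (fun y hy => by
        rw [interior_Icc] at hy
        have := hx₀.trans hy.1
        have : 0 < 1 - 2 * y := by linarith [hy.2]
        have : 0 < 1 - 2 * y * (1 - a) := by nlinarith [hy.2]
        have : 0 < 1 - 2 * y * a := by nlinarith [hy.2]
        have : 0 < 1 - y := by linarith [hy.2]
        positivity)
  rw [← entropyGapDeriv_half a]
  exact hmono ⟨le_rfl, hx₁⟩ ⟨hx₁, le_rfl⟩ hx₁

lemma entropyGap_half (a : ℝ) : entropyGap a (1 / 2) = 0 := by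
  rw [entropyGap, show 2 * (1 / 2) * (1 - a) = 1 - a by ring, show 2 * (1 / 2) * a = a by ring,
    binEntropy_one_sub, one_div, binEntropy_two_inv]
  ring

lemma entropyGap_nonneg (ha : a ∈ Set.Icc 0 1) (hx : x ∈ Set.Icc 0 (1 / 2)) :
    0 ≤ entropyGap a x := by
  obtain rfl | ha₀ := ha.1.eq_or_lt
  · simpa [entropyGap] using binEntropy_le_log_two
  obtain rfl | ha₁ := ha.2.eq_or_lt'
  · simpa [entropyGap] using binEntropy_le_log_two
  have hanti : AntitoneOn (entropyGap a) (Set.Icc 0 (1 / 2)) :=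
    antitoneOn_of_hasDerivWithinAt_nonpos (convex_Icc 0 (1 / 2))
      (by unfold entropyGap; fun_prop : Continuous (entropyGap a)).continuousOn
      (fun y hy => by
        rw [interior_Icc] at hy ⊢
        exact (hasDerivAt_entropyGap ha₀ ha₁ hy.1 hy.2).hasDerivWithinAt)
      (fun y hy => by
        rw [interior_Icc] at hy
        exact entropyGapDeriv_nonpos ha₀ ha₁ hy.1 hy.2.le)
  rw [← entropyGap_half a]
  exact hanti hx ⟨by norm_num, le_rfl⟩ hx.2

end

/-- For `a ∈ [0,1]` and `δ ∈ [0,1/2]`, the function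
`a ↦ h_b(a) − a h_b(2δ(1−a)) − (1−a) h_b(2δa)` is at most `1 − h_b(δ)`,
with equality at `a = 1/2`. -/
theorem one_bit_info_max (δ : ℝ) (hδ0 : 0 ≤ δ) (hδ1 : δ ≤ 1 / 2) :
    (∀ a ∈ Set.Icc (0 : ℝ) 1,
        binEnt a - a * binEnt (2 * δ * (1 - a)) - (1 - a) * binEnt (2 * δ * a) ≤
          1 - binEnt δ) ∧
      binEnt (1 / 2 : ℝ) - (1 / 2) * binEnt (2 * δ * (1 - 1 / 2)) -
          (1 - 1 / 2) * binEnt (2 * δ * (1 / 2)) =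
        1 - binEnt δ := by
  have hlog : 0 < log 2 := log_pos one_lt_two
  refine ⟨fun a ha => ?_, ?_⟩
  · have hgap : 1 - binEnt δ - (binEnt a - a * binEnt (2 * δ * (1 - a)) -
        (1 - a) * binEnt (2 * δ * a)) = entropyGap a δ / log 2 := by
      simp only [binEnt_eq_binEntropy_div_log_two, entropyGap]
      field_simp
    linarith [div_nonneg (entropyGap_nonneg ha ⟨hδ0, hδ1⟩) hlog.le]
  · rw [show 2 * δ * (1 - 1 / 2) = δ by ring, show 2 * δ * (1 / 2) = δ by ring]
    simp only [binEnt_eq_binEntropy_div_log_two, one_div, binEntropy_two_inv, div_self hlog.ne']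
    ring
end

section
/- Let X be a discrete random variable on [m] with distribution p_X (sorted decreasingly) and Y a discrete random variable with maximal correlation ρ_m(X;Y). Then P_e(X|Y) ≥ 1 − p_X(1) − ρ_m(X;Y)·√(1 − Σ_{i=1}^m p_X(i)²), where P_e(X|Y) is the minimal probability of error of estimating X from Y. -/
open Finset Real

private def maxCorrSet {α β : Type*} [Fintype α] [Fintype β] (r : α → β → ℝ) : Set ℝ :=
  { t : ℝ | ∃ f : α → ℝ, ∃ g : β → ℝ,
    (∑ x, ∑ y, f x * r x y) = 0 ∧ (∑ x, ∑ y, g y * r x y) = 0 ∧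
    (∑ x, ∑ y, (f x) ^ 2 * r x y) = 1 ∧ (∑ x, ∑ y, (g y) ^ 2 * r x y) = 1 ∧
    t = ∑ x, ∑ y, f x * g y * r x y }

private lemma maxCorr_eq {α β : Type*} [Fintype α] [Fintype β] (r : α → β → ℝ) :
    maxCorr r = sSup (maxCorrSet r) := rfl

private lemma bddAbove_maxCorrSet {α β : Type*} [Fintype α] [Fintype β]
    (p : α → β → ℝ) (hp0 : ∀ x y, 0 ≤ p x y) : BddAbove (maxCorrSet p) := by
  refine ⟨1, fun t ht => ?_⟩
  obtain ⟨f, g, h1, h2, h3, h4, rfl⟩ := ht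
  have h := Real.sum_mul_le_sqrt_mul_sqrt (Finset.univ ×ˢ Finset.univ : Finset (α × β))
    (fun z => f z.1 * Real.sqrt (p z.1 z.2)) (fun z => g z.2 * Real.sqrt (p z.1 z.2))
  have e1 : ∑ z ∈ (Finset.univ ×ˢ Finset.univ : Finset (α × β)),
      (f z.1 * Real.sqrt (p z.1 z.2)) * (g z.2 * Real.sqrt (p z.1 z.2))
      = ∑ x, ∑ y, f x * g y * p x y := by
    rw [Finset.sum_product]
    refine Finset.sum_congr rfl fun x _ => Finset.sum_congr rfl fun y _ => ?_
    rw [mul_mul_mul_comm, Real.mul_self_sqrt (hp0 x y)]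
  have e2 : ∑ z ∈ (Finset.univ ×ˢ Finset.univ : Finset (α × β)),
      (f z.1 * Real.sqrt (p z.1 z.2)) ^ 2 = 1 := by
    rw [← h3, Finset.sum_product]
    refine Finset.sum_congr rfl fun x _ => Finset.sum_congr rfl fun y _ => ?_
    rw [mul_pow, Real.sq_sqrt (hp0 x y)]
  have e3 : ∑ z ∈ (Finset.univ ×ˢ Finset.univ : Finset (α × β)),
      (g z.2 * Real.sqrt (p z.1 z.2)) ^ 2 = 1 := by
    rw [← h4, Finset.sum_product]
    refine Finset.sum_congr rfl fun x _ => Finset.sum_congr rfl fun y _ => ?_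
    rw [mul_pow, Real.sq_sqrt (hp0 x y)]
  rw [e1, e2, e3, Real.sqrt_one, mul_one] at h
  exact h

private lemma le_maxCorr_s9 {α β : Type*} [Fintype α] [Fintype β] (p : α → β → ℝ)
    (hp0 : ∀ x y, 0 ≤ p x y) (f : α → ℝ) (g : β → ℝ)
    (h1 : ∑ x, ∑ y, f x * p x y = 0) (h2 : ∑ x, ∑ y, g y * p x y = 0)
    (h3 : ∑ x, ∑ y, (f x) ^ 2 * p x y = 1) (h4 : ∑ x, ∑ y, (g y) ^ 2 * p x y = 1) :
    ∑ x, ∑ y, f x * g y * p x y ≤ maxCorr p :=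
  le_csSup (bddAbove_maxCorrSet p hp0) ⟨f, g, h1, h2, h3, h4, rfl⟩

private lemma maxCorr_nonneg_s9 {α β : Type*} [Fintype α] [Fintype β] (p : α → β → ℝ)
    (hp0 : ∀ x y, 0 ≤ p x y) : 0 ≤ maxCorr p := by
  rcases (maxCorrSet p).eq_empty_or_nonempty with h | ⟨t, ht⟩
  · rw [maxCorr_eq, h, Real.sSup_empty]
  · obtain ⟨f, g, h1, h2, h3, h4, rfl⟩ := ht
    have hpos := le_maxCorr_s9 p hp0 f g h1 h2 h3 h4
    have hneg : ∑ x, ∑ y, (-f x) * g y * p x y ≤ maxCorr p := by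
      refine le_maxCorr_s9 p hp0 (fun x => -f x) g ?_ h2 ?_ h4
      · simp only [neg_mul, Finset.sum_neg_distrib, h1, neg_zero]
      · simp only [neg_sq, h3]
    have heq : ∑ x, ∑ y, (-f x) * g y * p x y = -∑ x, ∑ y, f x * g y * p x y := by
      simp only [neg_mul, Finset.sum_neg_distrib]
    rw [heq] at hneg
    linarith

private lemma cov_bound {α β : Type*} [Fintype α] [Fintype β]
    (p : α → β → ℝ) (hp0 : ∀ x y, 0 ≤ p x y) (hp1 : ∑ x, ∑ y, p x y = 1)
    (G : β → ℝ) (x : α) (c : ℝ) (hc : c = ∑ y, p x y)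
    (q : β → ℝ) (hqd : ∀ y, q y = ∑ x', p x' y)
    (μ : ℝ) (hμ : μ = ∑ y, q y * G y)
    (V : ℝ) (hV : V = ∑ y, q y * (G y - μ) ^ 2) :
    ∑ y, (p x y - c * q y) * G y ≤
      maxCorr p * (Real.sqrt (c * (1 - c)) * Real.sqrt V) := by
  classical
  have hq0 : ∀ y, 0 ≤ q y := fun y => (hqd y) ▸ Finset.sum_nonneg fun x' _ => hp0 x' y
  have hc0 : 0 ≤ c := hc ▸ Finset.sum_nonneg fun y _ => hp0 x y
  have hq1 : ∑ y, q y = 1 := by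
    rw [Finset.sum_congr rfl fun y (_ : y ∈ univ) => hqd y, Finset.sum_comm]; exact hp1
  have hc1 : c ≤ 1 := by
    rw [hc, ← hp1]
    exact Finset.single_le_sum (f := fun x' => ∑ y, p x' y)
      (fun i _ => Finset.sum_nonneg fun y _ => hp0 i y) (Finset.mem_univ x)
  have hpleq : ∀ y, p x y ≤ q y := fun y => by
    rw [hqd]; exact Finset.single_le_sum (fun i _ => hp0 i y) (Finset.mem_univ x)
  have hV0 : 0 ≤ V := hV ▸ Finset.sum_nonneg fun y _ => mul_nonneg (hq0 y) (sq_nonneg _)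
  have hρ := maxCorr_nonneg_s9 p hp0
  have hLHS : ∑ y, (p x y - c * q y) * G y = ∑ y, (p x y - c * q y) * (G y - μ) := by
    have h0 : ∑ y, (p x y - c * q y) = 0 := by
      rw [Finset.sum_sub_distrib, ← Finset.mul_sum, hq1, mul_one, ← hc, sub_self]
    calc ∑ y, (p x y - c * q y) * G y
        = ∑ y, ((p x y - c * q y) * (G y - μ) + (p x y - c * q y) * μ) :=
          Finset.sum_congr rfl fun y _ => by ring
      _ = (∑ y, (p x y - c * q y) * (G y - μ)) + (∑ y, (p x y - c * q y)) * μ := by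
          rw [Finset.sum_add_distrib, Finset.sum_mul]
      _ = ∑ y, (p x y - c * q y) * (G y - μ) := by rw [h0, zero_mul, add_zero]
  rw [hLHS]
  by_cases hcz : c = 0
  · have hpz : ∀ y, p x y = 0 := by
      intro y
      refine le_antisymm ?_ (hp0 x y)
      calc p x y ≤ ∑ y', p x y' := Finset.single_le_sum (fun i _ => hp0 x i) (Finset.mem_univ y)
        _ = 0 := by rw [← hc, hcz]
    have hz : ∑ y, (p x y - c * q y) * (G y - μ) = 0 :=
      Finset.sum_eq_zero fun y _ => by rw [hpz y, hcz, zero_mul, sub_zero, zero_mul]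
    rw [hz, hcz]
    simp
  · by_cases hco : c = 1
    · have hqp : ∀ y, q y = p x y := by
        intro y
        rw [hqd]
        refine Finset.sum_eq_single_of_mem x (Finset.mem_univ x) ?_
        intro x' _ hne
        have hx'0 : ∑ y', p x' y' = 0 := by
          have hsplit := Finset.add_sum_erase Finset.univ (fun x'' => ∑ y', p x'' y')
            (Finset.mem_univ x)
          have hnn : 0 ≤ ∑ x'' ∈ Finset.univ.erase x, ∑ y', p x'' y' :=
            Finset.sum_nonneg fun i _ => Finset.sum_nonneg fun y' _ => hp0 i y'
          have hrest : ∑ x'' ∈ Finset.univ.erase x, ∑ y', p x'' y' = 0 := by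
            have h1 : (∑ y', p x y') = 1 := by rw [← hc, hco]
            have hb := hsplit.trans hp1
            linarith
          have := (Finset.sum_eq_zero_iff_of_nonneg
            (fun i _ => Finset.sum_nonneg fun y' _ => hp0 i y')).1 hrest x'
            (Finset.mem_erase.2 ⟨hne, Finset.mem_univ x'⟩)
          exact this
        refine le_antisymm ?_ (hp0 x' y)
        calc p x' y ≤ ∑ y', p x' y' :=
            Finset.single_le_sum (fun i _ => hp0 x' i) (Finset.mem_univ y)
          _ = 0 := hx'0
      have hz : ∑ y, (p x y - c * q y) * (G y - μ) = 0 :=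
        Finset.sum_eq_zero fun y _ => by rw [hqp y, hco, one_mul, sub_self, zero_mul]
      rw [hz, hco]
      simp
    · by_cases hVz : V = 0
      · have hterm : ∀ y ∈ Finset.univ, q y * (G y - μ) ^ 2 = 0 :=
          (Finset.sum_eq_zero_iff_of_nonneg
            (fun y _ => mul_nonneg (hq0 y) (sq_nonneg _))).1 (hV.symm.trans hVz)
        have hz : ∑ y, (p x y - c * q y) * (G y - μ) = 0 := by
          refine Finset.sum_eq_zero fun y _ => ?_
          rcases mul_eq_zero.1 (hterm y (Finset.mem_univ y)) with h | h
          · have hp' : p x y = 0 := le_antisymm (h ▸ hpleq y) (hp0 x y)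
            rw [hp', h, mul_zero, sub_zero, zero_mul]
          · rw [pow_eq_zero_iff (two_ne_zero)] at h
            rw [h, mul_zero]
        rw [hz, hVz]
        simp
      · have hcpos : 0 < c := lt_of_le_of_ne hc0 (Ne.symm hcz)
        have hclt : c < 1 := lt_of_le_of_ne hc1 hco
        have hVpos : 0 < V := lt_of_le_of_ne hV0 (Ne.symm hVz)
        set A := Real.sqrt (c * (1 - c)) with hA
        set B := Real.sqrt V with hB
        have hApos : 0 < A := Real.sqrt_pos.2 (by nlinarith)
        have hBpos : 0 < B := Real.sqrt_pos.2 hVpos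
        have hA2 : A ^ 2 = c * (1 - c) := Real.sq_sqrt (by nlinarith)
        have hB2 : B ^ 2 = V := Real.sq_sqrt hV0
        set f : α → ℝ := fun x' => ((if x' = x then (1 : ℝ) else 0) - c) / A with hf
        set g : β → ℝ := fun y => (G y - μ) / B with hg
        have hsum_ite : ∀ s : α → ℝ, ∑ x', ((if x' = x then (1 : ℝ) else 0) - c) * s x'
            = s x - c * ∑ x', s x' := by
          intro s
          simp only [sub_mul, Finset.sum_sub_distrib, ite_mul, one_mul, zero_mul,
            Finset.sum_ite_eq', Finset.mem_univ, if_true, ← Finset.mul_sum]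
        have m1 : ∑ x', ∑ y, f x' * p x' y = 0 := by
          have h1 : ∀ x', ∑ y, f x' * p x' y = f x' * ∑ y, p x' y :=
            fun x' => (Finset.mul_sum _ _ _).symm
          rw [Finset.sum_congr rfl fun x' _ => h1 x']
          have h2 : ∀ x', f x' * (∑ y, p x' y)
              = (((if x' = x then (1 : ℝ) else 0) - c) * ∑ y, p x' y) / A := fun x' => by
            rw [hf]; exact div_mul_eq_mul_div _ _ _
          rw [Finset.sum_congr rfl fun x' _ => h2 x', ← Finset.sum_div,
            hsum_ite (fun x' => ∑ y, p x' y), hp1, mul_one, ← hc, sub_self, zero_div]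
        have m2 : ∑ x', ∑ y, g y * p x' y = 0 := by
          rw [Finset.sum_comm]
          have h1 : ∀ y, ∑ x', g y * p x' y = g y * q y := fun y => by
            rw [← Finset.mul_sum, hqd]
          rw [Finset.sum_congr rfl fun y _ => h1 y]
          have h2 : ∀ y, g y * q y = ((G y - μ) * q y) / B := fun y => by
            rw [hg]; exact div_mul_eq_mul_div _ _ _
          rw [Finset.sum_congr rfl fun y _ => h2 y, ← Finset.sum_div]
          have h3 : ∑ y, (G y - μ) * q y = 0 := by
            have : ∀ y, (G y - μ) * q y = q y * G y - μ * q y := fun y => by ring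
            rw [Finset.sum_congr rfl fun y _ => this y, Finset.sum_sub_distrib,
              ← Finset.mul_sum, hq1, mul_one, ← hμ, sub_self]
          rw [h3, zero_div]
        have m3 : ∑ x', ∑ y, (f x') ^ 2 * p x' y = 1 := by
          have h1 : ∀ x', ∑ y, (f x') ^ 2 * p x' y = (f x') ^ 2 * ∑ y, p x' y :=
            fun x' => (Finset.mul_sum _ _ _).symm
          rw [Finset.sum_congr rfl fun x' _ => h1 x']
          have h2 : ∀ x', (f x') ^ 2 * (∑ y, p x' y)
              = (((if x' = x then (1 : ℝ) else 0) * (1 - 2 * c) + c ^ 2) * ∑ y, p x' y)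
                / A ^ 2 := by
            intro x'
            have hnum : ((if x' = x then (1 : ℝ) else 0) - c) ^ 2
                = (if x' = x then (1 : ℝ) else 0) * (1 - 2 * c) + c ^ 2 := by
              by_cases h : x' = x
              · rw [if_pos h]; ring
              · rw [if_neg h]; ring
            rw [hf, div_pow, div_mul_eq_mul_div, hnum]
          rw [Finset.sum_congr rfl fun x' _ => h2 x', ← Finset.sum_div]
          have h3 : ∑ x', ((if x' = x then (1 : ℝ) else 0) * (1 - 2 * c) + c ^ 2)
              * (∑ y, p x' y) = c * (1 - c) := by
            have expand : ∀ x', ((if x' = x then (1 : ℝ) else 0) * (1 - 2 * c) + c ^ 2)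
                * (∑ y, p x' y)
                = (if x' = x then (1 : ℝ) else 0) * ((1 - 2 * c) * ∑ y, p x' y)
                  + c ^ 2 * (∑ y, p x' y) := fun x' => by ring
            rw [Finset.sum_congr rfl fun x' _ => expand x', Finset.sum_add_distrib]
            simp only [ite_mul, one_mul, zero_mul, Finset.sum_ite_eq', Finset.mem_univ,
              if_true]
            rw [← Finset.mul_sum, hp1, mul_one, ← hc]
            ring
          rw [h3, ← hA2, div_self (by positivity)]
        have m4 : ∑ x', ∑ y, (g y) ^ 2 * p x' y = 1 := by
          rw [Finset.sum_comm]
          have h1 : ∀ y, ∑ x', (g y) ^ 2 * p x' y = (g y) ^ 2 * q y := fun y => by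
            rw [← Finset.mul_sum, hqd]
          rw [Finset.sum_congr rfl fun y _ => h1 y]
          have h2 : ∀ y, (g y) ^ 2 * q y = (q y * (G y - μ) ^ 2) / B ^ 2 := fun y => by
            rw [hg, div_pow, div_mul_eq_mul_div, mul_comm]
          rw [Finset.sum_congr rfl fun y _ => h2 y, ← Finset.sum_div, ← hV, ← hB2,
            div_self (by positivity)]
        have m5 : ∑ x', ∑ y, f x' * g y * p x' y
            = (∑ y, (p x y - c * q y) * (G y - μ)) / (A * B) := by
          rw [Finset.sum_comm]
          have h1 : ∀ y, ∑ x', f x' * g y * p x' y = g y * ∑ x', f x' * p x' y := fun y => by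
            rw [Finset.mul_sum]; exact Finset.sum_congr rfl fun x' _ => by ring
          rw [Finset.sum_congr rfl fun y _ => h1 y]
          have h2 : ∀ y, ∑ x', f x' * p x' y = (p x y - c * q y) / A := by
            intro y
            have ha : ∀ x', f x' * p x' y
                = (((if x' = x then (1 : ℝ) else 0) - c) * p x' y) / A := fun x' => by
              rw [hf]; exact div_mul_eq_mul_div _ _ _
            rw [Finset.sum_congr rfl fun x' _ => ha x', ← Finset.sum_div,
              hsum_ite (fun x' => p x' y), ← hqd]
          have h3 : ∀ y, g y * (∑ x', f x' * p x' y)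
              = ((p x y - c * q y) * (G y - μ)) / (A * B) := by
            intro y
            rw [h2 y, hg]
            rw [div_mul_div_comm, mul_comm (G y - μ) (p x y - c * q y), mul_comm B A]
          rw [Finset.sum_congr rfl fun y _ => h3 y, ← Finset.sum_div]
        have hmem := le_maxCorr_s9 p hp0 f g m1 m2 m3 m4
        rw [m5, div_le_iff₀ (by positivity : (0 : ℝ) < A * B)] at hmem
        exact hmem

/-- Fano-type bound via maximal correlation: for any (possibly randomized)
estimator `F` of `X` from `Y`, the error probability is at least
`1 − p_X(1) − ρₘ(X;Y)√(1 − ∑ᵢ p_X(i)²)`, where `p_X(1) = maxₓ p_X(x)`. -/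
theorem fano_maxCorr_bound {α β : Type*} [Fintype α] [Fintype β] [Nonempty α]
    (p : α → β → ℝ) (hp0 : ∀ x y, 0 ≤ p x y) (hp1 : ∑ x, ∑ y, p x y = 1)
    (F : β → α → ℝ) (hF0 : ∀ y x, 0 ≤ F y x) (hF1 : ∀ y, ∑ x, F y x = 1) :
    1 - ∑ x, ∑ y, p x y * F y x ≥
      1 - (univ.sup' univ_nonempty fun x => ∑ y, p x y) -
        maxCorr p * Real.sqrt (1 - ∑ x, (∑ y, p x y) ^ 2) := by
  classical
  have hpX0 : ∀ x, (0 : ℝ) ≤ ∑ y, p x y := fun x => Finset.sum_nonneg fun y _ => hp0 x y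
  have hq0 : ∀ y, (0 : ℝ) ≤ ∑ x, p x y := fun y => Finset.sum_nonneg fun x _ => hp0 x y
  have hq1 : ∑ y, ∑ x, p x y = 1 := by rw [Finset.sum_comm]; exact hp1
  have hpXle1 : ∀ x, ∑ y, p x y ≤ 1 := fun x => by
    rw [← hp1]
    exact Finset.single_le_sum (f := fun x' => ∑ y, p x' y) (fun i _ => hpX0 i)
      (Finset.mem_univ x)
  have hM : ∀ x, ∑ y, p x y ≤ univ.sup' univ_nonempty (fun x => ∑ y, p x y) :=
    fun x => Finset.le_sup' (f := fun x => ∑ y, p x y) (Finset.mem_univ x)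
  have hρ := maxCorr_nonneg_s9 p hp0
  have hF1' : ∀ y x, F y x ≤ 1 := fun y x => by
    rw [← hF1 y]
    exact Finset.single_le_sum (fun i _ => hF0 y i) (Finset.mem_univ x)
  have step1 : ∑ x, ∑ y, p x y * F y x
      = (∑ x, ∑ y, (∑ y', p x y') * (∑ x', p x' y) * F y x)
        + ∑ x, ∑ y, (p x y - (∑ y', p x y') * (∑ x', p x' y)) * F y x := by
    rw [← Finset.sum_add_distrib]
    refine Finset.sum_congr rfl fun x _ => ?_
    rw [← Finset.sum_add_distrib]
    exact Finset.sum_congr rfl fun y _ => by ring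
  have term1 : ∑ x, ∑ y, (∑ y', p x y') * (∑ x', p x' y) * F y x
      ≤ univ.sup' univ_nonempty (fun x => ∑ y, p x y) := by
    rw [Finset.sum_comm]
    calc ∑ y, ∑ x, (∑ y', p x y') * (∑ x', p x' y) * F y x
        ≤ ∑ y, (∑ x', p x' y) * (univ.sup' univ_nonempty (fun x => ∑ y, p x y)) := by
          refine Finset.sum_le_sum fun y _ => ?_
          have hre : ∑ x, (∑ y', p x y') * (∑ x', p x' y) * F y x
              = (∑ x', p x' y) * ∑ x, (∑ y', p x y') * F y x := by
            rw [Finset.mul_sum]; exact Finset.sum_congr rfl fun x _ => by ring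
          rw [hre]
          refine mul_le_mul_of_nonneg_left ?_ (hq0 y)
          calc ∑ x, (∑ y', p x y') * F y x
              ≤ ∑ x, (univ.sup' univ_nonempty (fun x => ∑ y, p x y)) * F y x :=
                Finset.sum_le_sum fun x _ =>
                  mul_le_mul_of_nonneg_right (hM x) (hF0 y x)
            _ = univ.sup' univ_nonempty (fun x => ∑ y, p x y) := by
                rw [← Finset.mul_sum, hF1 y, mul_one]
      _ = univ.sup' univ_nonempty (fun x => ∑ y, p x y) := by
          rw [← Finset.sum_mul, hq1, one_mul]
  have key : ∀ x : α, ∑ y, (p x y - (∑ y', p x y') * (∑ x', p x' y)) * F y x ≤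
      maxCorr p * (Real.sqrt ((∑ y', p x y') * (1 - ∑ y', p x y')) *
        Real.sqrt (∑ y, (∑ x', p x' y) *
          (F y x - ∑ y', (∑ x'', p x'' y') * F y' x) ^ 2)) :=
    fun x => cov_bound p hp0 hp1 (fun y => F y x) x (∑ y', p x y') rfl
      (fun y => ∑ x', p x' y) (fun y => rfl)
      (∑ y', (∑ x'', p x'' y') * F y' x) rfl
      (∑ y, (∑ x', p x' y) * (F y x - ∑ y', (∑ x'', p x'' y') * F y' x) ^ 2) rfl
  have hVsum : ∑ x, ∑ y, (∑ x', p x' y) *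
      (F y x - ∑ y', (∑ x'', p x'' y') * F y' x) ^ 2 ≤ 1 := by
    have hVle : ∀ x, ∑ y, (∑ x', p x' y) *
        (F y x - ∑ y', (∑ x'', p x'' y') * F y' x) ^ 2
        ≤ ∑ y, (∑ x', p x' y) * (F y x) ^ 2 := by
      intro x
      have expand : ∀ y, (∑ x', p x' y) *
          (F y x - ∑ y', (∑ x'', p x'' y') * F y' x) ^ 2
          = (∑ x', p x' y) * (F y x) ^ 2
            - 2 * (∑ y', (∑ x'', p x'' y') * F y' x) * ((∑ x', p x' y) * F y x)
            + (∑ y', (∑ x'', p x'' y') * F y' x) ^ 2 * (∑ x', p x' y) := fun y => by ring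
      rw [Finset.sum_congr rfl fun y _ => expand y, Finset.sum_add_distrib,
        Finset.sum_sub_distrib, ← Finset.mul_sum, ← Finset.mul_sum, hq1]
      nlinarith [sq_nonneg (∑ y', (∑ x'', p x'' y') * F y' x)]
    calc ∑ x, ∑ y, (∑ x', p x' y) * (F y x - ∑ y', (∑ x'', p x'' y') * F y' x) ^ 2
        ≤ ∑ x, ∑ y, (∑ x', p x' y) * (F y x) ^ 2 :=
          Finset.sum_le_sum fun x _ => hVle x
      _ = ∑ y, (∑ x', p x' y) * ∑ x, (F y x) ^ 2 := by
          rw [Finset.sum_comm]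
          exact Finset.sum_congr rfl fun y _ => by rw [← Finset.mul_sum]
      _ ≤ ∑ y, (∑ x', p x' y) * 1 := by
          refine Finset.sum_le_sum fun y _ => mul_le_mul_of_nonneg_left ?_ (hq0 y)
          calc ∑ x, (F y x) ^ 2 ≤ ∑ x, F y x :=
              Finset.sum_le_sum fun x _ => by nlinarith [hF0 y x, hF1' y x]
            _ = 1 := hF1 y
      _ = 1 := by
          simp only [mul_one]
          exact hq1
  have term2 : ∑ x, ∑ y, (p x y - (∑ y', p x y') * (∑ x', p x' y)) * F y x ≤
      maxCorr p * Real.sqrt (1 - ∑ x, (∑ y, p x y) ^ 2) := by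
    calc ∑ x, ∑ y, (p x y - (∑ y', p x y') * (∑ x', p x' y)) * F y x
        ≤ ∑ x, maxCorr p * (Real.sqrt ((∑ y', p x y') * (1 - ∑ y', p x y')) *
            Real.sqrt (∑ y, (∑ x', p x' y) *
              (F y x - ∑ y', (∑ x'', p x'' y') * F y' x) ^ 2)) :=
          Finset.sum_le_sum fun x _ => key x
      _ = maxCorr p * ∑ x, Real.sqrt ((∑ y', p x y') * (1 - ∑ y', p x y')) *
            Real.sqrt (∑ y, (∑ x', p x' y) *
              (F y x - ∑ y', (∑ x'', p x'' y') * F y' x) ^ 2) := by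
          rw [Finset.mul_sum]
      _ ≤ maxCorr p *
            (Real.sqrt (∑ x, Real.sqrt ((∑ y', p x y') * (1 - ∑ y', p x y')) ^ 2) *
             Real.sqrt (∑ x, Real.sqrt (∑ y, (∑ x', p x' y) *
               (F y x - ∑ y', (∑ x'', p x'' y') * F y' x) ^ 2) ^ 2)) :=
          mul_le_mul_of_nonneg_left (Real.sum_mul_le_sqrt_mul_sqrt Finset.univ _ _) hρ
      _ ≤ maxCorr p * Real.sqrt (1 - ∑ x, (∑ y, p x y) ^ 2) := by
          have e1 : ∑ x, Real.sqrt ((∑ y', p x y') * (1 - ∑ y', p x y')) ^ 2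
              = 1 - ∑ x, (∑ y, p x y) ^ 2 := by
            rw [Finset.sum_congr rfl fun x _ => Real.sq_sqrt
              (mul_nonneg (hpX0 x) (by linarith [hpXle1 x]))]
            have hr : ∀ x : α, (∑ y', p x y') * (1 - ∑ y', p x y')
                = (∑ y, p x y) - (∑ y, p x y) ^ 2 := fun x => by ring
            rw [Finset.sum_congr rfl fun x _ => hr x, Finset.sum_sub_distrib, hp1]
          have e2 : ∑ x, Real.sqrt (∑ y, (∑ x', p x' y) *
              (F y x - ∑ y', (∑ x'', p x'' y') * F y' x) ^ 2) ^ 2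
              = ∑ x, ∑ y, (∑ x', p x' y) *
                (F y x - ∑ y', (∑ x'', p x'' y') * F y' x) ^ 2 :=
            Finset.sum_congr rfl fun x _ => Real.sq_sqrt
              (Finset.sum_nonneg fun y _ => mul_nonneg (hq0 y) (sq_nonneg _))
          rw [e1, e2]
          have h3 : Real.sqrt (∑ x, ∑ y, (∑ x', p x' y) *
              (F y x - ∑ y', (∑ x'', p x'' y') * F y' x) ^ 2) ≤ 1 :=
            Real.sqrt_le_one.mpr hVsum
          calc maxCorr p * (Real.sqrt (1 - ∑ x, (∑ y, p x y) ^ 2) *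
                Real.sqrt (∑ x, ∑ y, (∑ x', p x' y) *
                  (F y x - ∑ y', (∑ x'', p x'' y') * F y' x) ^ 2))
              ≤ maxCorr p * (Real.sqrt (1 - ∑ x, (∑ y, p x y) ^ 2) * 1) :=
                mul_le_mul_of_nonneg_left
                  (mul_le_mul_of_nonneg_left h3 (Real.sqrt_nonneg _)) hρ
            _ = maxCorr p * Real.sqrt (1 - ∑ x, (∑ y, p x y) ^ 2) := by rw [mul_one]
  linarith [step1, term1, term2]
end

section
/- Let S, X be discrete random variables with finite supports, p_{S|X} fixed. Then for any Markov chain S → X → Y with I(X;Y) > 0, the ratio I(S;Y)/I(X;Y) is bounded below by inf over distributions q_X ≠ p_X of D(q_S‖p_S)/D(q_X‖p_X), where q_S is the distribution of S induced by p_{S|X} when X ∼ q_X. -/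
open Finset Real

private lemma gibbs_term (a b : ℝ) (ha : 0 ≤ a) (hb : 0 < b) :
    a - b ≤ a * Real.log (a / b) := by
  rcases eq_or_lt_of_le ha with h | h
  · simp [← h]; linarith
  · have h1 : Real.log (b / a) ≤ b / a - 1 := Real.log_le_sub_one_of_pos (div_pos hb h)
    have h2 : Real.log (b / a) = - Real.log (a / b) := by
      rw [← Real.log_inv, inv_div]
    rw [h2] at h1
    have h3 : b / a * a = b := div_mul_cancel₀ _ (ne_of_gt h)
    nlinarith [mul_le_mul_of_nonneg_right h1 h.le]

private lemma gibbs_term_strict (a b : ℝ) (ha : 0 ≤ a) (hb : 0 < b) (hab : a ≠ b) :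
    a - b < a * Real.log (a / b) := by
  rcases eq_or_lt_of_le ha with h | h
  · simp [← h]; linarith
  · have hne : b / a ≠ 1 := by
      intro hh
      apply hab
      field_simp at hh
      linarith
    have h1 : Real.log (b / a) < b / a - 1 := Real.log_lt_sub_one_of_pos (div_pos hb h) hne
    have h2 : Real.log (b / a) = - Real.log (a / b) := by
      rw [← Real.log_inv, inv_div]
    rw [h2] at h1
    have h3 : b / a * a = b := div_mul_cancel₀ _ (ne_of_gt h)
    nlinarith [mul_lt_mul_of_pos_right h1 h]

private lemma gibbs_nonneg {α : Type*} [Fintype α] (q p : α → ℝ)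
    (hq : ∀ x, 0 ≤ q x) (hp : ∀ x, 0 < p x)
    (hsum : ∑ x, q x = ∑ x, p x) :
    0 ≤ ∑ x, q x * Real.log (q x / p x) := by
  have h := Finset.sum_le_sum (fun x (_ : x ∈ Finset.univ) =>
    gibbs_term (q x) (p x) (hq x) (hp x))
  rw [Finset.sum_sub_distrib, hsum, sub_self] at h
  exact h

private lemma gibbs_pos {α : Type*} [Fintype α] (q p : α → ℝ)
    (hq : ∀ x, 0 ≤ q x) (hp : ∀ x, 0 < p x)
    (hsum : ∑ x, q x = ∑ x, p x) (hne : q ≠ p) :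
    0 < ∑ x, q x * Real.log (q x / p x) := by
  obtain ⟨x₀, hx₀⟩ := Function.ne_iff.mp hne
  have h := Finset.sum_lt_sum (f := fun x => q x - p x)
    (fun x (_ : x ∈ Finset.univ) => gibbs_term (q x) (p x) (hq x) (hp x))
    ⟨x₀, Finset.mem_univ x₀, gibbs_term_strict (q x₀) (p x₀) (hq x₀) (hp x₀) hx₀⟩
  rwa [Finset.sum_sub_distrib, hsum, sub_self] at h

private lemma marg_sum {σ α : Type*} [Fintype σ] [Fintype α]
    (c : α → σ → ℝ) (hc1 : ∀ x, ∑ s, c x s = 1) (f : α → ℝ) :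
    (∑ s, ∑ x, f x * c x s) = ∑ x, f x := by
  rw [Finset.sum_comm]
  simp [← Finset.mul_sum, hc1]

/-- For fixed `p_{S|X}` (channel `c`) and `p_X` with full support, and any
Markov chain `S → X → Y` (channel `W`) with `I(X;Y) > 0`,
`I(S;Y)/I(X;Y) ≥ inf_{q_X ≠ p_X} D(q_S‖p_S)/D(q_X‖p_X)`. -/
theorem ratio_mutual_information_ge_divergence_ratio
    {σ α β : Type*} [Fintype σ] [Fintype α] [Fintype β]
    (pX : α → ℝ) (hpX : ∀ x, 0 < pX x) (hpX1 : ∑ x, pX x = 1)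
    (c : α → σ → ℝ) (hc0 : ∀ x s, 0 ≤ c x s) (hc1 : ∀ x, ∑ s, c x s = 1)
    (hpS : ∀ s, 0 < ∑ x, pX x * c x s)
    (W : α → β → ℝ) (hW0 : ∀ x y, 0 ≤ W x y) (hW1 : ∀ x, ∑ y, W x y = 1)
    (hIXY : 0 < ∑ x, ∑ y, pX x * W x y *
        Real.log ((pX x * W x y) / (pX x * ∑ x', pX x' * W x' y))) :
    (∑ s, ∑ y, (∑ x, pX x * c x s * W x y) *
          Real.log ((∑ x, pX x * c x s * W x y) /
            ((∑ x, pX x * c x s) * ∑ x', pX x' * W x' y))) /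
        (∑ x, ∑ y, pX x * W x y *
          Real.log ((pX x * W x y) / (pX x * ∑ x', pX x' * W x' y))) ≥
      sInf { t : ℝ | ∃ qX : α → ℝ, (∀ x, 0 ≤ qX x) ∧ (∑ x, qX x = 1) ∧
        qX ≠ pX ∧
        t = (∑ s, (∑ x, qX x * c x s) *
              Real.log ((∑ x, qX x * c x s) / (∑ x, pX x * c x s))) /
            (∑ x, qX x * Real.log (qX x / pX x)) } := by
  set T : Set ℝ := { t : ℝ | ∃ qX : α → ℝ, (∀ x, 0 ≤ qX x) ∧ (∑ x, qX x = 1) ∧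
        qX ≠ pX ∧
        t = (∑ s, (∑ x, qX x * c x s) *
              Real.log ((∑ x, qX x * c x s) / (∑ x, pX x * c x s))) /
            (∑ x, qX x * Real.log (qX x / pX x)) } with hT
  -- 0 is a lower bound of T
  have hlb : ∀ t ∈ T, (0:ℝ) ≤ t := by
    rintro t ⟨q, h0, h1, hne, rfl⟩
    have hD : 0 < ∑ x, q x * Real.log (q x / pX x) :=
      gibbs_pos q pX h0 hpX (by rw [h1, hpX1]) hne
    have hN : 0 ≤ ∑ s, (∑ x, q x * c x s) *
        Real.log ((∑ x, q x * c x s) / (∑ x, pX x * c x s)) := by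
      refine gibbs_nonneg (fun s => ∑ x, q x * c x s) (fun s => ∑ x, pX x * c x s)
        (fun s => Finset.sum_nonneg fun x _ => mul_nonneg (h0 x) (hc0 x s)) hpS ?_
      rw [marg_sum c hc1, marg_sum c hc1, h1, hpX1]
    exact div_nonneg hN hD.le
  -- key pointwise inequality for each y
  have key : ∀ y : β,
      sInf T * (∑ x, pX x * W x y *
        Real.log ((pX x * W x y) / (pX x * ∑ x', pX x' * W x' y))) ≤
      ∑ s, (∑ x, pX x * c x s * W x y) *
        Real.log ((∑ x, pX x * c x s * W x y) /
          ((∑ x, pX x * c x s) * ∑ x', pX x' * W x' y)) := by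
    intro y
    set pYy : ℝ := ∑ x', pX x' * W x' y with hpYy
    have hpYnn : (0:ℝ) ≤ pYy :=
      Finset.sum_nonneg fun x _ => mul_nonneg (hpX x).le (hW0 x y)
    rcases eq_or_lt_of_le hpYnn with hy | hy
    · -- pYy = 0
      have hz : ∀ x, pX x * W x y = 0 := by
        intro x
        exact (Finset.sum_eq_zero_iff_of_nonneg
          (fun x _ => mul_nonneg (hpX x).le (hW0 x y))).mp hy.symm x (Finset.mem_univ x)
      have h1 : (∑ x, pX x * W x y *
          Real.log ((pX x * W x y) / (pX x * pYy))) = 0 :=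
        Finset.sum_eq_zero fun x _ => by rw [hz x, zero_mul]
      have h2 : ∀ s : σ, (∑ x, pX x * c x s * W x y) = 0 := fun s =>
        Finset.sum_eq_zero fun x _ => by
          rw [show pX x * c x s * W x y = pX x * W x y * c x s from by ring, hz x, zero_mul]
      have h3 : (∑ s, (∑ x, pX x * c x s * W x y) *
          Real.log ((∑ x, pX x * c x s * W x y) / ((∑ x, pX x * c x s) * pYy))) = 0 :=
        Finset.sum_eq_zero fun s _ => by rw [h2 s, zero_mul]
      rw [h1, h3, mul_zero]
    · -- pYy > 0
      have hpYne : pYy ≠ 0 := ne_of_gt hy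
      set qX : α → ℝ := fun x => pX x * W x y / pYy with hqX
      have hq0 : ∀ x, 0 ≤ qX x := fun x =>
        div_nonneg (mul_nonneg (hpX x).le (hW0 x y)) hpYnn
      have hq1 : ∑ x, qX x = 1 := by
        show (∑ x, pX x * W x y / pYy) = 1
        rw [← Finset.sum_div, ← hpYy, div_self hpYne]
      have hPW : ∀ x, pX x * W x y = pYy * qX x := by
        intro x
        show pX x * W x y = pYy * (pX x * W x y / pYy)
        field_simp
      have hlogX : ∀ x, pX x * W x y * Real.log ((pX x * W x y) / (pX x * pYy)) =
          pYy * (qX x * Real.log (qX x / pX x)) := by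
        intro x
        have harg : qX x / pX x = (pX x * W x y) / (pX x * pYy) := by
          show pX x * W x y / pYy / pX x = _
          rw [div_div, mul_comm pYy (pX x)]
        rw [← harg, hPW x]
        ring
      set qS : σ → ℝ := fun s => ∑ x, qX x * c x s with hqS
      have hJ : ∀ s : σ, (∑ x, pX x * c x s * W x y) = pYy * qS s := by
        intro s
        show _ = pYy * ∑ x, qX x * c x s
        rw [Finset.mul_sum]
        refine Finset.sum_congr rfl fun x _ => ?_
        rw [show pX x * c x s * W x y = (pX x * W x y) * c x s from by ring, hPW x]
        ring
      have hXsum : (∑ x, pX x * W x y *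
          Real.log ((pX x * W x y) / (pX x * pYy))) =
          pYy * ∑ x, qX x * Real.log (qX x / pX x) := by
        rw [Finset.mul_sum]
        exact Finset.sum_congr rfl fun x _ => hlogX x
      have hSsum : (∑ s, (∑ x, pX x * c x s * W x y) *
          Real.log ((∑ x, pX x * c x s * W x y) / ((∑ x, pX x * c x s) * pYy))) =
          pYy * ∑ s, qS s * Real.log (qS s / (∑ x, pX x * c x s)) := by
        rw [Finset.mul_sum]
        refine Finset.sum_congr rfl fun s _ => ?_
        rw [hJ s, mul_comm (∑ x, pX x * c x s) pYy,
          mul_div_mul_left _ _ hpYne]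
        ring
      rw [hXsum, hSsum]
      set DX : ℝ := ∑ x, qX x * Real.log (qX x / pX x) with hDX
      set DS : ℝ := ∑ s, qS s * Real.log (qS s / (∑ x, pX x * c x s)) with hDS
      by_cases hqp : qX = pX
      · have hDX0 : DX = 0 := by
          rw [hDX]
          exact Finset.sum_eq_zero fun x _ => by
            rw [hqp, div_self (ne_of_gt (hpX x)), Real.log_one, mul_zero]
        have hqs : ∀ s, qS s = ∑ x, pX x * c x s := by
          intro s
          show (∑ x, qX x * c x s) = _
          rw [hqp]
        have hDS0 : DS = 0 := by
          rw [hDS]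
          exact Finset.sum_eq_zero fun s _ => by
            rw [hqs s, div_self (ne_of_gt (hpS s)), Real.log_one, mul_zero]
        rw [hDX0, hDS0]
        simp
      · have hDXpos : 0 < DX := gibbs_pos qX pX hq0 hpX (by rw [hq1, hpX1]) hqp
        have hqS0 : ∀ s, 0 ≤ qS s := fun s =>
          Finset.sum_nonneg fun x _ => mul_nonneg (hq0 x) (hc0 x s)
        have hDSnn : 0 ≤ DS := by
          rw [hDS]
          refine gibbs_nonneg qS (fun s => ∑ x, pX x * c x s) hqS0 hpS ?_
          show (∑ s, ∑ x, qX x * c x s) = _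
          rw [marg_sum c hc1, marg_sum c hc1, hq1, hpX1]
        have hmem : DS / DX ∈ T := ⟨qX, hq0, hq1, hqp, rfl⟩
        have hle : sInf T ≤ DS / DX := csInf_le ⟨0, fun t ht => hlb t ht⟩ hmem
        have hmul : sInf T * DX ≤ DS := by
          have h := mul_le_mul_of_nonneg_right hle hDXpos.le
          rwa [div_mul_cancel₀ _ (ne_of_gt hDXpos)] at h
        calc sInf T * (pYy * DX) = pYy * (sInf T * DX) := by ring
          _ ≤ pYy * DS := mul_le_mul_of_nonneg_left hmul hpYnn
  rw [ge_iff_le, le_div_iff₀ hIXY]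
  calc sInf T * (∑ x, ∑ y, pX x * W x y *
        Real.log ((pX x * W x y) / (pX x * ∑ x', pX x' * W x' y)))
      = ∑ y, sInf T * (∑ x, pX x * W x y *
        Real.log ((pX x * W x y) / (pX x * ∑ x', pX x' * W x' y))) := by
        rw [Finset.sum_comm, Finset.mul_sum]
    _ ≤ ∑ y, ∑ s, (∑ x, pX x * c x s * W x y) *
        Real.log ((∑ x, pX x * c x s * W x y) /
          ((∑ x, pX x * c x s) * ∑ x', pX x' * W x' y)) :=
        Finset.sum_le_sum fun y _ => key y
    _ = ∑ s, ∑ y, (∑ x, pX x * c x s * W x y) *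
        Real.log ((∑ x, pX x * c x s * W x y) /
          ((∑ x, pX x * c x s) * ∑ x', pX x' * W x' y)) := Finset.sum_comm
end

section
/- Define δ(p_{S,X}) = min{‖E[f(X)|S]‖₂² : f:𝒳→ℝ, E[f(X)]=0, ‖f(X)‖₂=1}. If δ(p_{S,X}) = 0 and H(X) > 0, then there exists a conditional distribution p_{Y|X} with Y binary such that S → X → Y, I(X;Y) > 0, and S is independent of Y (I(S;Y) = 0). -/
/-!
A minimiser `f` of `δ` exists by compactness of the normalised functions (this needs `p_X > 0`,
and `H(X) > 0` makes the set non-empty), and `δ = 0` forces `E[f(X) | S] = 0`. After scaling so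
that `|f| < 1/2`, the channel `P(Y = 1 | X = x) = 1/2 + f x` gives `P(Y = 1 | S = s) = 1/2` for
every `s`, so `Y` is uniform and independent of `S`, while `f ≠ 0` makes `Y` depend on `X`.
-/

open Finset Real

-- The left-hand side is `D(Bern u ‖ Bern ½)` in bits.
lemma mul_logb_two_mul_add_eq_one_sub_binEntropy {u : ℝ} (h0 : 0 < u) (h1 : u < 1) :
    u * logb 2 (2 * u) + (1 - u) * logb 2 (2 * (1 - u)) = 1 - binEntropy u / log 2 := by
  have hlog2 : log 2 ≠ 0 := (log_pos one_lt_two).ne'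
  simp only [logb, binEntropy, log_inv, log_mul two_ne_zero h0.ne',
    log_mul two_ne_zero (sub_pos.2 h1).ne']
  field_simp
  ring

lemma mul_logb_two_mul_add_nonneg {u : ℝ} (h0 : 0 < u) (h1 : u < 1) :
    0 ≤ u * logb 2 (2 * u) + (1 - u) * logb 2 (2 * (1 - u)) := by
  rw [mul_logb_two_mul_add_eq_one_sub_binEntropy h0 h1, sub_nonneg,
    div_le_one (log_pos one_lt_two)]
  exact binEntropy_le_log_two

lemma mul_logb_two_mul_add_pos {u : ℝ} (h0 : 0 < u) (h1 : u < 1) (hu : u ≠ 2⁻¹) :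
    0 < u * logb 2 (2 * u) + (1 - u) * logb 2 (2 * (1 - u)) := by
  rw [mul_logb_two_mul_add_eq_one_sub_binEntropy h0 h1, sub_pos,
    div_lt_one (log_pos one_lt_two)]
  exact binEntropy_lt_log_two.2 hu

section Weighted

variable {α : Type*} [Fintype α] {q : α → ℝ}

def normalizedFunctions (q : α → ℝ) : Set (α → ℝ) :=
  {f | ∑ x, q x * f x = 0 ∧ ∑ x, q x * f x ^ 2 = 1}

lemma exists_lt_one_of_entropy_pos (hq : ∀ x, 0 ≤ q x) (hq1 : ∑ x, q x = 1)
    (hH : 0 < -∑ x, q x * logb 2 (q x)) : ∃ a, q a < 1 := by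
  by_contra! h
  have hq_one : ∀ x, q x = 1 := fun x =>
    le_antisymm (hq1 ▸ single_le_sum (fun y _ => hq y) (mem_univ x)) (h x)
  simp [hq_one] at hH

lemma isCompact_normalizedFunctions (hq : ∀ x, 0 < q x) :
    IsCompact (normalizedFunctions q) := by
  refine Metric.isCompact_of_isClosed_isBounded ?_ ?_
  · exact (isClosed_eq (by fun_prop) continuous_const).inter
      (isClosed_eq (by fun_prop) continuous_const)
  · refine (Bornology.IsBounded.pi fun x => Metric.isBounded_closedBall
      (x := (0 : ℝ)) (r := √(1 / q x))).subset fun f hf x _ => ?_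
    have hfx : q x * f x ^ 2 ≤ 1 :=
      hf.2 ▸ single_le_sum (fun y _ => mul_nonneg (hq y).le (sq_nonneg _)) (mem_univ x)
    rw [Metric.mem_closedBall, dist_zero_right, norm_eq_abs]
    exact abs_le_sqrt ((le_div_iff₀' (hq x)).2 hfx)

lemma normalizedFunctions_nonempty [DecidableEq α] (hq1 : ∑ x, q x = 1) {a : α}
    (ha0 : 0 < q a) (ha1 : q a < 1) : (normalizedFunctions q).Nonempty := by
  set v := q a * (1 - q a)
  have hv : 0 < v := mul_pos ha0 (sub_pos.2 ha1)
  refine ⟨fun x => ((if x = a then 1 else 0) - q a) / √v, ?_, ?_⟩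
  · simp_rw [mul_div_assoc', ← sum_div, mul_sub, sum_sub_distrib, ← sum_mul, hq1]
    simp
  · simp_rw [div_pow, sq_sqrt hv.le, mul_div_assoc', ← sum_div]
    rw [div_eq_one_iff_eq hv.ne']
    have hsq : ∀ x, q x * ((if x = a then 1 else 0) - q a) ^ 2 =
        (if x = a then q x * (1 - 2 * q a) else 0) + q x * q a ^ 2 := fun x => by
      split_ifs <;> ring
    simp [hsq, sum_add_distrib, ← sum_mul, hq1, v]
    ring

lemma exists_pos_forall_abs_mul_lt (f : α → ℝ) {ε : ℝ} (hε : 0 < ε) :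
    ∃ c > 0, ∀ x, |c * f x| < ε := by
  have hM : 0 < 1 + ∑ x, |f x| := by positivity
  refine ⟨ε / (1 + ∑ x, |f x|), by positivity, fun x => ?_⟩
  have hfx : |f x| < 1 + ∑ x, |f x| := by
    linarith [single_le_sum (fun y _ => abs_nonneg (f y)) (mem_univ x)]
  rw [abs_mul, abs_of_pos (by positivity), div_mul_eq_mul_div, div_lt_iff₀ hM]
  gcongr

end Weighted

section Joint

variable {σ α : Type*} [Fintype σ] [Fintype α] {p : σ → α → ℝ}

/-- `‖E[f(X) | S]‖₂²`, where `∑ x, p s x * f x = P(S = s) E[f(X) | S = s]`. -/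
noncomputable def condMeanSqNorm (p : σ → α → ℝ) (f : α → ℝ) : ℝ :=
  ∑ s, (∑ x, p s x) * ((∑ x, p s x * f x) / (∑ x, p s x)) ^ 2

lemma sum_mul_eq_zero_of_condMeanSqNorm_eq_zero (hp0 : ∀ s x, 0 ≤ p s x) {f : α → ℝ}
    (h : condMeanSqNorm p f = 0) (s : σ) : ∑ x, p s x * f x = 0 := by
  have hterm := (sum_eq_zero_iff_of_nonneg fun t _ => mul_nonneg
    (sum_nonneg fun x _ => hp0 t x) (sq_nonneg _)).1 h s (mem_univ s)
  rcases (sum_nonneg fun x _ => hp0 s x).eq_or_lt with hps | hps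
  · have hp_zero := (sum_eq_zero_iff_of_nonneg fun x _ => hp0 s x).1 hps.symm
    exact sum_eq_zero fun x hx => by rw [hp_zero x hx, zero_mul]
  · simpa [hps.ne'] using hterm

lemma exists_sum_mul_eq_zero_of_sInf_eq_zero (hp0 : ∀ s x, 0 ≤ p s x)
    (hX : ∀ x, 0 < ∑ s, p s x) (hne : (normalizedFunctions fun x => ∑ s, p s x).Nonempty)
    (hδ : sInf { t : ℝ | ∃ f : α → ℝ,
        (∑ x, (∑ s, p s x) * f x) = 0 ∧ (∑ x, (∑ s, p s x) * (f x) ^ 2) = 1 ∧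
        t = condMeanSqNorm p f } = 0) :
    ∃ f ∈ normalizedFunctions fun x => ∑ s, p s x, ∀ s, ∑ x, p s x * f x = 0 := by
  have hset : { t : ℝ | ∃ f : α → ℝ,
        (∑ x, (∑ s, p s x) * f x) = 0 ∧ (∑ x, (∑ s, p s x) * (f x) ^ 2) = 1 ∧
        t = condMeanSqNorm p f } =
      condMeanSqNorm p '' normalizedFunctions fun x => ∑ s, p s x := by
    ext t
    simp only [Set.mem_ofPred_eq, Set.mem_image, normalizedFunctions, and_assoc,
      eq_comm (a := t)]
  rw [hset] at hδ
  obtain ⟨f, hf, hf_zero⟩ := hδ ▸ ((isCompact_normalizedFunctions hX).image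
    (by unfold condMeanSqNorm; fun_prop)).sInf_mem (hne.image _)
  exact ⟨f, hf, sum_mul_eq_zero_of_condMeanSqNorm_eq_zero hp0 hf_zero⟩

end Joint

noncomputable def tiltedChannel {α : Type*} (g : α → ℝ) (x : α) (y : Bool) : ℝ :=
  bif y then 2⁻¹ + g x else 2⁻¹ - g x

namespace tiltedChannel

variable {α : Type*} {g : α → ℝ}

lemma false_add_true (x : α) : tiltedChannel g x false + tiltedChannel g x true = 1 := by
  simp only [tiltedChannel, cond_false, cond_true]; norm_num

lemma pos {x : α} (hg : |g x| < 2⁻¹) (y : Bool) : 0 < tiltedChannel g x y := by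
  cases y <;> simp only [tiltedChannel, cond_false, cond_true] <;>
    linarith [abs_lt.1 hg]

variable [Fintype α]

lemma sum_mul_eq {r : α → ℝ} (h : ∑ x, r x * g x = 0) (y : Bool) :
    ∑ x, r x * tiltedChannel g x y = (∑ x, r x) / 2 := by
  cases y <;> simp only [tiltedChannel, cond_false, cond_true, mul_add, mul_sub, sum_add_distrib,
    sum_sub_distrib, ← sum_mul, h] <;> ring

lemma mutualInfo_pos {q : α → ℝ} (hq : ∀ x, 0 < q x) (hq1 : ∑ x, q x = 1)
    (hg : ∀ x, |g x| < 2⁻¹) (hmean : ∑ x, q x * g x = 0) {b : α} (hb : g b ≠ 0) :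
    0 < ∑ x, ∑ y : Bool, q x * tiltedChannel g x y *
      logb 2 ((q x * tiltedChannel g x y) / (q x * ∑ x', q x' * tiltedChannel g x' y)) := by
  have hterm : ∀ x, ∑ y : Bool, q x * tiltedChannel g x y *
      logb 2 ((q x * tiltedChannel g x y) / (q x * ∑ x', q x' * tiltedChannel g x' y)) =
      q x * (tiltedChannel g x true * logb 2 (2 * tiltedChannel g x true) +
        (1 - tiltedChannel g x true) * logb 2 (2 * (1 - tiltedChannel g x true))) := by
    intro x
    simp_rw [Fintype.sum_bool, sum_mul_eq hmean, hq1, mul_div_mul_left _ _ (hq x).ne',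
      eq_sub_of_add_eq (false_add_true x), div_div_eq_mul_div, div_one]
    ring_nf
  have hW_lt : ∀ x, tiltedChannel g x true < 1 := fun x => by
    linarith [pos (hg x) false, false_add_true (g := g) x]
  simp_rw [hterm]
  refine sum_pos' (fun x _ => mul_nonneg (hq x).le
    (mul_logb_two_mul_add_nonneg (pos (hg x) true) (hW_lt x))) ⟨b, mem_univ b, mul_pos (hq b)
    (mul_logb_two_mul_add_pos (pos (hg b) true) (hW_lt b) ?_)⟩
  simpa [tiltedChannel] using hb

end tiltedChannel

/-- If the smallest PIC quantity `δ(p_{S,X}) = inf{‖E[f(X)|S]‖₂² : E f = 0, ‖f‖₂ = 1}`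
is zero and `H(X) > 0`, then there exists a binary channel `p_{Y|X}` with
`S → X → Y`, `I(X;Y) > 0`, and `S` independent of `Y` (so `I(S;Y) = 0`). -/
theorem perfect_privacy_of_delta_eq_zero
    {σ α : Type*} [Fintype σ] [Fintype α]
    (p : σ → α → ℝ) (hp0 : ∀ s x, 0 ≤ p s x) (hp1 : ∑ s, ∑ x, p s x = 1)
    (hX : ∀ x, 0 < ∑ s, p s x)
    (hH : 0 < -∑ x, (∑ s, p s x) * Real.logb 2 (∑ s, p s x))
    (hδ : sInf { t : ℝ | ∃ f : α → ℝ,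
        (∑ x, (∑ s, p s x) * f x) = 0 ∧ (∑ x, (∑ s, p s x) * (f x) ^ 2) = 1 ∧
        t = ∑ s, (∑ x, p s x) *
          ((∑ x, p s x * f x) / (∑ x, p s x)) ^ 2 } = 0) :
    ∃ W : α → Bool → ℝ, (∀ x y, 0 ≤ W x y) ∧ (∀ x, W x false + W x true = 1) ∧
      (0 < ∑ x, ∑ y : Bool, (∑ s, p s x) * W x y *
          Real.logb 2 (((∑ s, p s x) * W x y) /
            ((∑ s, p s x) * ∑ x', (∑ s, p s x') * W x' y))) ∧
      (∀ s y, (∑ x, p s x * W x y) =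
          (∑ x, p s x) * ∑ x', (∑ s', p s' x') * W x' y) ∧
      (∑ s, ∑ y : Bool, (∑ x, p s x * W x y) *
          Real.logb 2 ((∑ x, p s x * W x y) /
            ((∑ x, p s x) * ∑ x', (∑ s', p s' x') * W x' y))) = 0 := by
  classical
  have hq1 : ∑ x, ∑ s, p s x = 1 := sum_comm.trans hp1
  obtain ⟨a, ha⟩ := exists_lt_one_of_entropy_pos (fun x => (hX x).le) hq1 hH
  obtain ⟨f, ⟨hf_mean, hf_sq⟩, hf_cond⟩ := exists_sum_mul_eq_zero_of_sInf_eq_zero hp0 hX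
    (normalizedFunctions_nonempty hq1 (hX a) ha) hδ
  obtain ⟨b, hb⟩ : ∃ b, f b ≠ 0 := by
    by_contra! hf
    simp [hf] at hf_sq
  obtain ⟨c, hc, hcf⟩ := exists_pos_forall_abs_mul_lt f (by norm_num : (0 : ℝ) < 2⁻¹)
  have hg_mean : ∑ x, (∑ s, p s x) * (c * f x) = 0 := by
    simp_rw [mul_left_comm _ c, ← mul_sum, hf_mean, mul_zero]
  have hg_cond (s : σ) : ∑ x, p s x * (c * f x) = 0 := by
    simp_rw [mul_left_comm _ c, ← mul_sum, hf_cond s, mul_zero]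
  set W := tiltedChannel (c * f ·)
  have hY (y : Bool) : ∑ x, (∑ s, p s x) * W x y = 1 / 2 := by
    rw [tiltedChannel.sum_mul_eq hg_mean, hq1]
  have hSY (s : σ) (y : Bool) :
      ∑ x, p s x * W x y = (∑ x, p s x) * ∑ x', (∑ s', p s' x') * W x' y := by
    rw [tiltedChannel.sum_mul_eq (hg_cond s), hY]
    ring
  refine ⟨W, fun x y => (tiltedChannel.pos (hcf x) y).le, tiltedChannel.false_add_true,
    tiltedChannel.mutualInfo_pos hX hq1 hcf hg_mean (mul_ne_zero hc.ne' hb), hSY,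
    sum_eq_zero fun s _ => sum_eq_zero fun y _ => ?_⟩
  rw [hSY s y]
  by_cases h : (∑ x, p s x) * ∑ x', (∑ s', p s' x') * W x' y = 0 <;> simp [h]
end

section
/- Let (S_i, X_i), i = 1,…,n be i.i.d. pairs with common joint distribution p_{S,X} over finite sets. Define δ(p) as the minimum of ‖E[f(X)|S]‖₂² over zero-mean unit-variance functions f of X (with δ = 0 if |𝒳| > |𝒮|). Then δ(p_{Sⁿ,Xⁿ}) = δ(p_{S,X})ⁿ. -/
/-!
Write `Φ(f) = ‖E[f(X)|S]‖²`. Normalizing `f` to mean zero and variance one shows that `δ(p)` is the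
best constant `c` in `Φ(f) ≥ (E f)² + c · Var f` for all `f`. This inequality tensorizes with
constant `c d` (for `c, d ∈ [0, 1]`): for `F(X, Y)` under `p ⊗ q`, condition on `T` and apply the
bound for `p` to `x ↦ E[F(x, Y) | T]`, then apply the bound for `q` to `y ↦ E F(X, y)` and to each
`F(x, ·)`. Hence `δ(p)ⁿ` is admissible for `pⁿ`, i.e. `δ(pⁿ) ≥ δ(p)ⁿ`. Conversely, `f ↦ f^{⊗n}`
preserves the constraints and `Φ(f^{⊗n}) = Φ(f)ⁿ`, so `δ(pⁿ) ≤ δ(p)ⁿ`. When `|𝒳| ≤ 1` no `f`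
is admissible and both sides are `sInf ∅ = 0`.
-/

open Finset Real

/-- `δ(p_{S,X})`: the infimum of `‖E[f(X)|S]‖₂²` over zero-mean,
unit-variance functions `f` of `X`. -/
noncomputable def deltaPIC {σ α : Type*} [Fintype σ] [Fintype α]
    (p : σ → α → ℝ) : ℝ :=
  sInf { t : ℝ | ∃ f : α → ℝ,
    (∑ x, (∑ s, p s x) * f x) = 0 ∧ (∑ x, (∑ s, p s x) * (f x) ^ 2) = 1 ∧
    t = ∑ s, (∑ x, p s x) * ((∑ x, p s x * f x) / (∑ x, p s x)) ^ 2 }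

theorem Finset.sq_sum_mul_le_sum_mul_sum_mul_sq {ι : Type*} (s : Finset ι) (w v : ι → ℝ)
    (hw : ∀ i ∈ s, 0 ≤ w i) :
    (∑ i ∈ s, w i * v i) ^ 2 ≤ (∑ i ∈ s, w i) * ∑ i ∈ s, w i * v i ^ 2 :=
  sum_sq_le_sum_mul_sum_of_sq_le_mul s hw (fun i hi => mul_nonneg (hw i hi) (sq_nonneg _))
    fun i _ => le_of_eq (by ring)

namespace PIC

variable {σ α τ β : Type*} [Fintype σ] [Fintype α] [Fintype τ] [Fintype β]

section Kernel

variable (p : σ → α → ℝ)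

noncomputable def margS (s : σ) : ℝ := ∑ x, p s x

noncomputable def margX (x : α) : ℝ := ∑ s, p s x

noncomputable def mean (f : α → ℝ) : ℝ := ∑ x, margX p x * f x

noncomputable def sqNorm (f : α → ℝ) : ℝ := ∑ x, margX p x * f x ^ 2

noncomputable def variance (f : α → ℝ) : ℝ := sqNorm p f - mean p f ^ 2

noncomputable def condMean (f : α → ℝ) (s : σ) : ℝ := (∑ x, p s x * f x) / margS p s

noncomputable def condSqNorm (f : α → ℝ) : ℝ := ∑ s, margS p s * condMean p f s ^ 2

def sphere : Set (α → ℝ) := {f | mean p f = 0 ∧ sqNorm p f = 1}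

theorem deltaPIC_eq_sInf : deltaPIC p = sInf (condSqNorm p '' sphere p) := by
  unfold deltaPIC
  congr 1
  ext t
  constructor
  · rintro ⟨f, hmean, hsq, rfl⟩
    exact ⟨f, ⟨hmean, hsq⟩, rfl⟩
  · rintro ⟨f, ⟨hmean, hsq⟩, rfl⟩
    exact ⟨f, hmean, hsq, rfl⟩

theorem sum_margX : ∑ x, margX p x = ∑ s, ∑ x, p s x := Finset.sum_comm

theorem sqNorm_eq_mean (f : α → ℝ) : sqNorm p f = mean p fun x => f x ^ 2 := rfl

theorem mean_add (f g : α → ℝ) : mean p (fun x => f x + g x) = mean p f + mean p g := by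
  simp only [mean, mul_add, sum_add_distrib]

theorem mean_const_mul (a : ℝ) (f : α → ℝ) : mean p (fun x => a * f x) = a * mean p f := by
  simp only [mean, mul_sum]
  exact sum_congr rfl fun x _ => by ring

variable {p}

theorem mean_mono (hp0 : ∀ s x, 0 ≤ p s x) {f g : α → ℝ} (hfg : ∀ x, f x ≤ g x) :
    mean p f ≤ mean p g :=
  sum_le_sum fun x _ => mul_le_mul_of_nonneg_left (hfg x) (sum_nonneg fun s _ => hp0 s x)

theorem mean_const (h1 : ∑ s, ∑ x, p s x = 1) (a : ℝ) : mean p (fun _ => a) = a := by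
  rw [mean, ← sum_mul, sum_margX, h1, one_mul]

theorem variance_eq_sum (h1 : ∑ s, ∑ x, p s x = 1) (f : α → ℝ) :
    variance p f = ∑ x, margX p x * (f x - mean p f) ^ 2 := by
  have hexp : ∀ x, margX p x * (f x - mean p f) ^ 2
      = margX p x * f x ^ 2 - 2 * mean p f * (margX p x * f x) + mean p f ^ 2 * margX p x :=
    fun x => by ring
  rw [sum_congr rfl fun x _ => hexp x, sum_add_distrib, sum_sub_distrib, ← mul_sum, ← mul_sum,
    sum_margX, h1]
  unfold variance sqNorm mean
  ring

theorem variance_nonneg (hp0 : ∀ s x, 0 ≤ p s x) (h1 : ∑ s, ∑ x, p s x = 1) (f : α → ℝ) :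
    0 ≤ variance p f := by
  rw [variance_eq_sum h1]
  exact sum_nonneg fun x _ => mul_nonneg (sum_nonneg fun s _ => hp0 s x) (sq_nonneg _)

theorem mean_sq_le_sqNorm (hp0 : ∀ s x, 0 ≤ p s x) (h1 : ∑ s, ∑ x, p s x = 1) (f : α → ℝ) :
    mean p f ^ 2 ≤ sqNorm p f :=
  sub_nonneg.1 (variance_nonneg hp0 h1 f)

theorem mean_affine (h1 : ∑ s, ∑ x, p s x = 1) (a b : ℝ) (g : α → ℝ) :
    mean p (fun x => a + b * g x) = a + b * mean p g := by
  rw [mean_add, mean_const h1, mean_const_mul]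

theorem variance_affine (h1 : ∑ s, ∑ x, p s x = 1) (a b : ℝ) (g : α → ℝ) :
    variance p (fun x => a + b * g x) = b ^ 2 * variance p g := by
  rw [variance_eq_sum h1, variance_eq_sum h1, mean_affine h1, mul_sum]
  exact sum_congr rfl fun x _ => by ring

theorem sum_margS_mul_condMean (hS : ∀ s, 0 < margS p s) (f : α → ℝ) :
    ∑ s, margS p s * condMean p f s = mean p f := by
  simp only [condMean, mul_div_cancel₀ _ (hS _).ne', mean, margX, sum_mul]
  exact sum_comm

theorem condSqNorm_nonneg (hS : ∀ s, 0 < margS p s) (f : α → ℝ) : 0 ≤ condSqNorm p f :=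
  sum_nonneg fun s _ => mul_nonneg (hS s).le (sq_nonneg _)

theorem condSqNorm_affine (hS : ∀ s, 0 < margS p s) (h1 : ∑ s, ∑ x, p s x = 1)
    (a b : ℝ) (g : α → ℝ) :
    condSqNorm p (fun x => a + b * g x)
      = a ^ 2 + 2 * a * b * mean p g + b ^ 2 * condSqNorm p g := by
  have hcond : ∀ s, condMean p (fun x => a + b * g x) s = a + b * condMean p g s := by
    intro s
    have hsum : ∑ x, p s x * (a + b * g x) = a * margS p s + b * ∑ x, p s x * g x := by
      simp only [margS, mul_sum, ← sum_add_distrib]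
      exact sum_congr rfl fun x _ => by ring
    have := (hS s).ne'
    rw [condMean, condMean, hsum]
    field_simp
  have hexp : condSqNorm p (fun x => a + b * g x) = a ^ 2 * ∑ s, margS p s
      + 2 * a * b * ∑ s, margS p s * condMean p g s + b ^ 2 * condSqNorm p g := by
    simp only [condSqNorm, hcond, mul_sum, ← sum_add_distrib]
    exact sum_congr rfl fun s _ => by ring
  rw [hexp, sum_margS_mul_condMean hS, show ∑ s, margS p s = 1 from h1, mul_one]

theorem mean_sq_le_condSqNorm (hS : ∀ s, 0 < margS p s) (h1 : ∑ s, ∑ x, p s x = 1)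
    (f : α → ℝ) : mean p f ^ 2 ≤ condSqNorm p f := by
  have := sq_sum_mul_le_sum_mul_sum_mul_sq univ (margS p) (condMean p f) fun s _ => (hS s).le
  rwa [sum_margS_mul_condMean hS, show ∑ s, margS p s = 1 from h1, one_mul] at this

theorem condSqNorm_le_sqNorm (hp0 : ∀ s x, 0 ≤ p s x) (hS : ∀ s, 0 < margS p s)
    (f : α → ℝ) : condSqNorm p f ≤ sqNorm p f := by
  have hsq : sqNorm p f = ∑ s, ∑ x, p s x * f x ^ 2 := by
    simp only [sqNorm, margX, sum_mul]
    exact sum_comm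
  rw [hsq]
  refine sum_le_sum fun s _ => ?_
  have hCS : (∑ x, p s x * f x) ^ 2 ≤ margS p s * ∑ x, p s x * f x ^ 2 :=
    sq_sum_mul_le_sum_mul_sum_mul_sq univ (p s) f fun x _ => hp0 s x
  calc margS p s * condMean p f s ^ 2 = (∑ x, p s x * f x) ^ 2 / margS p s := by
        rw [condMean]; field_simp [(hS s).ne']
    _ ≤ ∑ x, p s x * f x ^ 2 := by rwa [div_le_iff₀' (hS s)]

theorem deltaPIC_nonneg (hS : ∀ s, 0 < margS p s) : 0 ≤ deltaPIC p := by
  rw [deltaPIC_eq_sInf]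
  exact Real.sInf_nonneg (Set.forall_mem_image.2 fun f _ => condSqNorm_nonneg hS f)

theorem deltaPIC_le_condSqNorm (hS : ∀ s, 0 < margS p s) {f : α → ℝ} (hf : f ∈ sphere p) :
    deltaPIC p ≤ condSqNorm p f := by
  rw [deltaPIC_eq_sInf]
  exact csInf_le ⟨0, Set.forall_mem_image.2 fun g _ => condSqNorm_nonneg hS g⟩ ⟨f, hf, rfl⟩

theorem deltaPIC_le_one (hp0 : ∀ s x, 0 ≤ p s x) (hS : ∀ s, 0 < margS p s)
    (hne : (sphere p).Nonempty) : deltaPIC p ≤ 1 := by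
  obtain ⟨f, hf⟩ := hne
  calc deltaPIC p ≤ condSqNorm p f := deltaPIC_le_condSqNorm hS hf
    _ ≤ sqNorm p f := condSqNorm_le_sqNorm hp0 hS f
    _ = 1 := hf.2

theorem exists_mem_sphere_of_variance_pos (h1 : ∑ s, ∑ x, p s x = 1) {f : α → ℝ}
    (hv : 0 < variance p f) :
    ∃ g ∈ sphere p, f = fun x => mean p f + √(variance p f) * g x := by
  set m := mean p f
  set v := variance p f
  have hsv : 0 < √v := Real.sqrt_pos.2 hv
  set g : α → ℝ := fun x => (f x - m) / √v
  have hfg : f = fun x => m + √v * g x := funext fun x => by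
    change f x = m + √v * ((f x - m) / √v)
    rw [mul_div_cancel₀ _ hsv.ne']
    ring
  have hmean := mean_affine h1 m (√v) g
  have hvar := variance_affine h1 m (√v) g
  rw [← hfg, Real.sq_sqrt hv.le] at hvar
  rw [← hfg] at hmean
  have hg0 : mean p g = 0 := (mul_eq_zero.1 (by linarith)).resolve_left hsv.ne'
  have hg1 : variance p g = 1 := (mul_eq_left₀ hv.ne').1 (by rw [← hvar])
  refine ⟨g, ⟨hg0, ?_⟩, hfg⟩
  rw [variance, hg0] at hg1
  linarith

theorem sphere_nonempty [Nontrivial α] (hX : ∀ x, 0 < margX p x) (h1 : ∑ s, ∑ x, p s x = 1) :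
    (sphere p).Nonempty := by
  classical
  obtain ⟨a, b, hab⟩ := exists_pair_ne α
  let u : α → ℝ := fun x => if x = a then 1 else 0
  have hu : mean p u = margX p a := by simp [mean, u]
  have hv : 0 < variance p u := by
    rw [variance_eq_sum h1]
    calc 0 < margX p b * (u b - mean p u) ^ 2 := by
          simp only [hu, u, if_neg hab.symm, zero_sub, neg_sq]
          exact mul_pos (hX b) (pow_pos (hX a) 2)
      _ ≤ _ := single_le_sum (f := fun x => margX p x * (u x - mean p u) ^ 2)
          (fun x _ => mul_nonneg (hX x).le (sq_nonneg _)) (mem_univ b)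
  obtain ⟨g, hg, -⟩ := exists_mem_sphere_of_variance_pos h1 hv
  exact ⟨g, hg⟩

theorem sphere_eq_empty [Subsingleton α] (h1 : ∑ s, ∑ x, p s x = 1) : sphere p = ∅ := by
  refine Set.eq_empty_of_forall_notMem fun f ⟨hmean, hsq⟩ => ?_
  have hconst : ∀ x, mean p f = f x := fun x => calc
    mean p f = ∑ y, margX p y * f x := sum_congr rfl fun y _ => by rw [Subsingleton.elim y x]
    _ = f x := by rw [← sum_mul, sum_margX, h1, one_mul]
  have hvar : variance p f = 0 := by
    rw [variance_eq_sum h1]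
    exact sum_eq_zero fun x _ => by rw [hconst x, sub_self, sq, mul_zero, mul_zero]
  rw [variance, hmean, hsq] at hvar
  norm_num at hvar

theorem deltaPIC_of_subsingleton [Subsingleton α] (h1 : ∑ s, ∑ x, p s x = 1) :
    deltaPIC p = 0 := by
  rw [deltaPIC_eq_sInf, sphere_eq_empty h1, Set.image_empty, Real.sInf_empty]

end Kernel

def IsPICLowerBound (p : σ → α → ℝ) (c : ℝ) : Prop :=
  ∀ f : α → ℝ, mean p f ^ 2 + c * variance p f ≤ condSqNorm p f

section LowerBound

variable {p : σ → α → ℝ}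

theorem isPICLowerBound_deltaPIC (hp0 : ∀ s x, 0 ≤ p s x) (hS : ∀ s, 0 < margS p s)
    (h1 : ∑ s, ∑ x, p s x = 1) : IsPICLowerBound p (deltaPIC p) := by
  intro f
  rcases (variance_nonneg hp0 h1 f).eq_or_lt with hv | hv
  · rw [← hv, mul_zero, add_zero]
    exact mean_sq_le_condSqNorm hS h1 f
  · obtain ⟨g, hg, hfg⟩ := exists_mem_sphere_of_variance_pos h1 hv
    have hδ := mul_le_mul_of_nonneg_left (deltaPIC_le_condSqNorm hS hg) hv.le
    calc mean p f ^ 2 + deltaPIC p * variance p f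
        ≤ mean p f ^ 2 + variance p f * condSqNorm p g := by linarith
      _ = condSqNorm p f := by
        conv_rhs => rw [hfg]
        rw [condSqNorm_affine hS h1, hg.1, Real.sq_sqrt hv.le]
        ring

theorem IsPICLowerBound.le_condSqNorm {c : ℝ} (H : IsPICLowerBound p c) (f : α → ℝ) :
    (1 - c) * mean p f ^ 2 + c * sqNorm p f ≤ condSqNorm p f := by
  have := H f
  rw [variance] at this
  linarith

theorem IsPICLowerBound.le_deltaPIC {c : ℝ} (H : IsPICLowerBound p c)
    (hne : (sphere p).Nonempty) : c ≤ deltaPIC p := by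
  rw [deltaPIC_eq_sInf]
  refine le_csInf (hne.image _) (Set.forall_mem_image.2 fun f hf => ?_)
  have := H f
  rw [variance, hf.1, hf.2] at this
  linarith

end LowerBound

def prodKernel (p : σ → α → ℝ) (q : τ → β → ℝ) : σ × τ → α × β → ℝ :=
  fun z w => p z.1 w.1 * q z.2 w.2

section Prod

variable {p : σ → α → ℝ} {q : τ → β → ℝ}

omit [Fintype σ] [Fintype τ] in
theorem margS_prodKernel (z : σ × τ) : margS (prodKernel p q) z = margS p z.1 * margS q z.2 := by
  simp only [margS, prodKernel, Fintype.sum_prod_type, sum_mul_sum]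

omit [Fintype α] [Fintype β] in
theorem margX_prodKernel (w : α × β) : margX (prodKernel p q) w = margX p w.1 * margX q w.2 := by
  simp only [margX, prodKernel, Fintype.sum_prod_type, sum_mul_sum]

theorem mean_prodKernel (G : α → β → ℝ) :
    mean (prodKernel p q) (fun w => G w.1 w.2) = mean p fun x => mean q (G x) := by
  simp only [mean, Fintype.sum_prod_type, margX_prodKernel, mul_sum]
  exact sum_congr rfl fun x _ => sum_congr rfl fun y _ => by ring

theorem mean_prodKernel' (G : α → β → ℝ) :
    mean (prodKernel p q) (fun w => G w.1 w.2) = mean q fun y => mean p fun x => G x y := by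
  rw [mean_prodKernel]
  simp only [mean, mul_sum]
  rw [sum_comm]
  exact sum_congr rfl fun y _ => sum_congr rfl fun x _ => by ring

theorem sqNorm_prodKernel (G : α → β → ℝ) :
    sqNorm (prodKernel p q) (fun w => G w.1 w.2) = mean p fun x => sqNorm q (G x) :=
  mean_prodKernel fun x y => G x y ^ 2

omit [Fintype σ] [Fintype τ] in
theorem condMean_prodKernel (G : α → β → ℝ) (z : σ × τ) :
    condMean (prodKernel p q) (fun w => G w.1 w.2) z
      = condMean p (fun x => condMean q (G x) z.2) z.1 := by
  simp only [condMean, margS_prodKernel, Fintype.sum_prod_type, prodKernel, mul_div_assoc',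
    ← sum_div, div_div, mul_sum]
  congr 1
  · exact sum_congr rfl fun x _ => sum_congr rfl fun y _ => by ring
  · ring

theorem condSqNorm_prodKernel (G : α → β → ℝ) :
    condSqNorm (prodKernel p q) (fun w => G w.1 w.2)
      = ∑ t, margS q t * condSqNorm p fun x => condMean q (G x) t := by
  simp only [condSqNorm, Fintype.sum_prod_type, margS_prodKernel, condMean_prodKernel, mul_sum]
  rw [sum_comm]
  exact sum_congr rfl fun t _ => sum_congr rfl fun s _ => by ring

omit [Fintype τ] in
theorem mean_condMean_comm (G : α → β → ℝ) (t : τ) :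
    (mean p fun x => condMean q (G x) t) = condMean q (fun y => mean p fun x => G x y) t := by
  simp only [mean, condMean, mul_div_assoc', ← sum_div, mul_sum]
  rw [sum_comm]
  exact congrArg (· / _) (sum_congr rfl fun y _ => sum_congr rfl fun x _ => by ring)

theorem sum_margS_mul_sqNorm_condMean (G : α → β → ℝ) :
    ∑ t, margS q t * sqNorm p (fun x => condMean q (G x) t)
      = mean p fun x => condSqNorm q (G x) := by
  simp only [sqNorm, mean, condSqNorm, mul_sum]
  rw [sum_comm]
  exact sum_congr rfl fun x _ => sum_congr rfl fun t _ => by ring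

theorem IsPICLowerBound.prod {c d : ℝ} (hp0 : ∀ s x, 0 ≤ p s x) (hq0 : ∀ t y, 0 ≤ q t y)
    (hp1 : ∑ s, ∑ x, p s x = 1) (hq1 : ∑ t, ∑ y, q t y = 1)
    (hc0 : 0 ≤ c) (hc1 : c ≤ 1) (hd0 : 0 ≤ d) (hd1 : d ≤ 1)
    (hp : IsPICLowerBound p c) (hq : IsPICLowerBound q d) :
    IsPICLowerBound (prodKernel p q) (c * d) := by
  intro F
  obtain ⟨G, rfl⟩ : ∃ G : α → β → ℝ, F = fun w => G w.1 w.2 := ⟨fun x y => F (x, y), rfl⟩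
  set h : β → ℝ := fun y => mean p fun x => G x y
  set M := mean (prodKernel p q) fun w => G w.1 w.2
  have hMh : M = mean q h := mean_prodKernel' G
  have hMG : M = mean p fun x => mean q (G x) := mean_prodKernel G
  have hstep_p : (1 - c) * condSqNorm q h + c * mean p (fun x => condSqNorm q (G x))
      ≤ condSqNorm (prodKernel p q) fun w => G w.1 w.2 := by
    rw [condSqNorm_prodKernel, ← sum_margS_mul_sqNorm_condMean, condSqNorm, mul_sum, mul_sum,
      ← sum_add_distrib]
    refine sum_le_sum fun t _ => ?_
    have := mul_le_mul_of_nonneg_left (hp.le_condSqNorm fun x => condMean q (G x) t)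
      (show 0 ≤ margS q t from sum_nonneg fun y _ => hq0 t y)
    rw [mean_condMean_comm] at this
    linarith
  have hstep_h : (1 - d) * M ^ 2 + d * sqNorm q h ≤ condSqNorm q h := by
    rw [hMh]
    exact hq.le_condSqNorm h
  have hstep_G : (1 - d) * sqNorm p (fun x => mean q (G x))
      + d * sqNorm (prodKernel p q) (fun w => G w.1 w.2) ≤ mean p fun x => condSqNorm q (G x) := by
    rw [sqNorm_prodKernel, sqNorm_eq_mean, ← mean_const_mul, ← mean_const_mul, ← mean_add]
    exact mean_mono hp0 fun x => hq.le_condSqNorm (G x)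
  have hvar_h : M ^ 2 ≤ sqNorm q h := hMh ▸ mean_sq_le_sqNorm hq0 hq1 h
  have hvar_G : M ^ 2 ≤ sqNorm p (fun x => mean q (G x)) :=
    hMG ▸ mean_sq_le_sqNorm hp0 hp1 fun x => mean q (G x)
  rw [variance]
  linarith [mul_le_mul_of_nonneg_left hstep_h (sub_nonneg.2 hc1),
    mul_le_mul_of_nonneg_left hstep_G hc0, mul_nonneg (mul_nonneg (sub_nonneg.2 hc1) hd0)
      (sub_nonneg.2 hvar_h), mul_nonneg (mul_nonneg hc0 (sub_nonneg.2 hd1)) (sub_nonneg.2 hvar_G)]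

end Prod

section Equiv

variable {σ' α' : Type*} [Fintype σ'] [Fintype α'] {p : σ → α → ℝ} (eσ : σ' ≃ σ) (eα : α' ≃ α)

omit [Fintype α] [Fintype α'] in
theorem margX_comp_equiv (x : α') :
    margX (fun s x => p (eσ s) (eα x)) x = margX p (eα x) :=
  eσ.sum_comp fun s => p s (eα x)

omit [Fintype σ] [Fintype σ'] in
theorem margS_comp_equiv (s : σ') :
    margS (fun s x => p (eσ s) (eα x)) s = margS p (eσ s) :=
  eα.sum_comp fun x => p (eσ s) x

theorem mean_comp_equiv (f : α → ℝ) :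
    mean (fun s x => p (eσ s) (eα x)) (f ∘ eα) = mean p f := by
  simp only [mean, margX_comp_equiv, Function.comp_apply]
  exact eα.sum_comp fun x => margX p x * f x

theorem sqNorm_comp_equiv (f : α → ℝ) :
    sqNorm (fun s x => p (eσ s) (eα x)) (f ∘ eα) = sqNorm p f :=
  mean_comp_equiv eσ eα fun x => f x ^ 2

theorem condSqNorm_comp_equiv (f : α → ℝ) :
    condSqNorm (fun s x => p (eσ s) (eα x)) (f ∘ eα) = condSqNorm p f := by
  have hinner : ∀ s, ∑ x, p (eσ s) (eα x) * f (eα x) = ∑ x, p (eσ s) x * f x :=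
    fun s => eα.sum_comp fun x => p (eσ s) x * f x
  simp only [condSqNorm, condMean, margS_comp_equiv, Function.comp_apply, hinner]
  exact eσ.sum_comp fun s => margS p s * ((∑ x, p s x * f x) / margS p s) ^ 2

theorem IsPICLowerBound.comp_equiv {c : ℝ} (H : IsPICLowerBound p c) :
    IsPICLowerBound (fun s x => p (eσ s) (eα x)) c := by
  intro f
  have hf : f = (f ∘ eα.symm) ∘ eα := by ext; simp
  rw [hf, variance, mean_comp_equiv, sqNorm_comp_equiv, condSqNorm_comp_equiv]
  exact H _

end Equiv

def piKernel (p : σ → α → ℝ) (ι : Type*) [Fintype ι] : (ι → σ) → (ι → α) → ℝ :=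
  fun s x => ∏ i, p (s i) (x i)

section Pi

variable {p : σ → α → ℝ} {ι : Type*} [Fintype ι] [DecidableEq ι]

omit [Fintype σ] in
theorem margS_piKernel (s : ι → σ) : margS (piKernel p ι) s = ∏ i, margS p (s i) :=
  (Fintype.prod_sum fun i x => p (s i) x).symm

omit [Fintype α] in
theorem margX_piKernel (x : ι → α) : margX (piKernel p ι) x = ∏ i, margX p (x i) :=
  (Fintype.prod_sum fun i s => p s (x i)).symm

theorem sum_piKernel (h1 : ∑ s, ∑ x, p s x = 1) : ∑ s, ∑ x, piKernel p ι s x = 1 := by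
  change ∑ s, margS (piKernel p ι) s = 1
  simp only [margS_piKernel, ← Fintype.prod_sum fun _ s => margS p s]
  simp only [margS, h1, prod_const_one]

omit [Fintype σ] [Fintype α] [DecidableEq ι] in
theorem piKernel_nonneg (hp0 : ∀ s x, 0 ≤ p s x) (s : ι → σ) (x : ι → α) :
    0 ≤ piKernel p ι s x :=
  prod_nonneg fun i _ => hp0 (s i) (x i)

omit [Fintype σ] in
theorem margS_piKernel_pos (hS : ∀ s, 0 < margS p s) (s : ι → σ) : 0 < margS (piKernel p ι) s := by
  rw [margS_piKernel]
  exact prod_pos fun i _ => hS (s i)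

theorem mean_piKernel_prod (f : α → ℝ) :
    mean (piKernel p ι) (fun x => ∏ i, f (x i)) = mean p f ^ Fintype.card ι := by
  simp only [mean, margX_piKernel, ← prod_mul_distrib]
  rw [← Fintype.prod_sum fun _ x => margX p x * f x, prod_const, card_univ]

theorem sqNorm_piKernel_prod (f : α → ℝ) :
    sqNorm (piKernel p ι) (fun x => ∏ i, f (x i)) = sqNorm p f ^ Fintype.card ι := by
  simp only [sqNorm_eq_mean, ← prod_pow]
  exact mean_piKernel_prod fun x => f x ^ 2

theorem condSqNorm_piKernel_prod (f : α → ℝ) :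
    condSqNorm (piKernel p ι) (fun x => ∏ i, f (x i)) = condSqNorm p f ^ Fintype.card ι := by
  have hcond : ∀ s : ι → σ, condMean (piKernel p ι) (fun x => ∏ i, f (x i)) s
      = ∏ i, condMean p f (s i) := fun s => by
    simp only [condMean, margS_piKernel, piKernel, ← prod_mul_distrib]
    rw [← Fintype.prod_sum fun i x => p (s i) x * f x, prod_div_distrib]
  simp only [condSqNorm, hcond, margS_piKernel, ← prod_pow, ← prod_mul_distrib]
  rw [← Fintype.prod_sum fun _ s => margS p s * condMean p f s ^ 2, prod_const, card_univ]

theorem prod_mem_sphere_piKernel [Nonempty ι] {f : α → ℝ} (hf : f ∈ sphere p) :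
    (fun x => ∏ i, f (x i)) ∈ sphere (piKernel p ι) := by
  refine ⟨?_, ?_⟩
  · rw [mean_piKernel_prod, hf.1, zero_pow Fintype.card_ne_zero]
  · rw [sqNorm_piKernel_prod, hf.2, one_pow]

theorem IsPICLowerBound.piKernel_fin {c : ℝ} (hp0 : ∀ s x, 0 ≤ p s x)
    (h1 : ∑ s, ∑ x, p s x = 1) (hc0 : 0 ≤ c) (hc1 : c ≤ 1) (H : IsPICLowerBound p c) :
    ∀ n : ℕ, IsPICLowerBound (piKernel p (Fin n)) (c ^ n)
  | 0 => fun f => by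
    simp [variance, sqNorm, condSqNorm, condMean, mean, margS, margX, piKernel]
  | n + 1 => by
    have hsplit : piKernel p (Fin (n + 1)) = fun s x => prodKernel p (piKernel p (Fin n))
        ((Fin.consEquiv fun _ => σ).symm s) ((Fin.consEquiv fun _ => α).symm x) := by
      funext s x
      simp [piKernel, prodKernel, Fin.prod_univ_succ, Fin.consEquiv, Fin.tail]
    rw [hsplit, pow_succ']
    exact (H.prod hp0 (piKernel_nonneg hp0) h1 (sum_piKernel h1) hc0 hc1 (pow_nonneg hc0 n)
      (pow_le_one₀ hc0 hc1) (H.piKernel_fin hp0 h1 hc0 hc1 n)).comp_equiv _ _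

theorem deltaPIC_piKernel_le [Nonempty ι] (hS : ∀ s, 0 < margS p s)
    (hne : (sphere p).Nonempty) : deltaPIC (piKernel p ι) ≤ deltaPIC p ^ Fintype.card ι := by
  have hmono : MonotoneOn (· ^ Fintype.card ι) (condSqNorm p '' sphere p) := by
    rintro _ ⟨f, -, rfl⟩ _ ⟨g, -, rfl⟩ hfg
    exact pow_le_pow_left₀ (condSqNorm_nonneg hS f) hfg _
  rw [deltaPIC_eq_sInf p, hmono.map_csInf_of_continuousWithinAt
    (continuous_pow _).continuousWithinAt (hne.image _)
    ⟨0, Set.forall_mem_image.2 fun f _ => condSqNorm_nonneg hS f⟩, Set.image_image]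
  refine le_csInf (hne.image _) (Set.forall_mem_image.2 fun f hf => ?_)
  rw [← condSqNorm_piKernel_prod]
  exact deltaPIC_le_condSqNorm (margS_piKernel_pos hS) (prod_mem_sphere_piKernel hf)

theorem pow_deltaPIC_le_deltaPIC_piKernel (hp0 : ∀ s x, 0 ≤ p s x) (hS : ∀ s, 0 < margS p s)
    (h1 : ∑ s, ∑ x, p s x = 1) (hne : (sphere p).Nonempty) {n : ℕ} (hn : 0 < n) :
    deltaPIC p ^ n ≤ deltaPIC (piKernel p (Fin n)) := by
  have : Nonempty (Fin n) := ⟨⟨0, hn⟩⟩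
  obtain ⟨f, hf⟩ := hne
  exact ((isPICLowerBound_deltaPIC hp0 hS h1).piKernel_fin hp0 h1 (deltaPIC_nonneg hS)
    (deltaPIC_le_one hp0 hS ⟨f, hf⟩) n).le_deltaPIC ⟨_, prod_mem_sphere_piKernel hf⟩

end Pi

end PIC

open PIC in
/-- Tensorization of the smallest PIC quantity: for i.i.d. pairs
`(Sᵢ, Xᵢ) ∼ p_{S,X}`, `δ(p_{Sⁿ,Xⁿ}) = δ(p_{S,X})ⁿ`. -/
theorem deltaPIC_tensorize {σ α : Type*} [Fintype σ] [Fintype α]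
    (n : ℕ) (hn : 0 < n)
    (p : σ → α → ℝ) (hp0 : ∀ s x, 0 ≤ p s x) (hp1 : ∑ s, ∑ x, p s x = 1)
    (hS : ∀ s, 0 < ∑ x, p s x) (hX : ∀ x, 0 < ∑ s, p s x) :
    deltaPIC (fun (s : Fin n → σ) (x : Fin n → α) => ∏ i, p (s i) (x i)) =
      (deltaPIC p) ^ n := by
  change deltaPIC (piKernel p (Fin n)) = deltaPIC p ^ n
  rcases subsingleton_or_nontrivial α with _ | _
  · rw [deltaPIC_of_subsingleton hp1, deltaPIC_of_subsingleton (sum_piKernel hp1),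
      zero_pow hn.ne']
  · have hne := sphere_nonempty hX hp1
    have : Nonempty (Fin n) := ⟨⟨0, hn⟩⟩
    refine le_antisymm ?_ (pow_deltaPIC_le_deltaPIC_piKernel hp0 hS hp1 hne hn)
    simpa only [Fintype.card_fin] using deltaPIC_piKernel_le (ι := Fin n) hS hne
end
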